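/- arXiv:1901.00293 — 6 statements merged into one kernel-verified Lean document; each statement's English description precedes it below -/
import Mathlib

section
/- Let A be a weakly cancellative commutative complex Banach algebra with dense principal ideals, let T = (T(t))_{t>0} be a strongly continuous semigroup of multipliers on A with ⋃_{t>0} T(t)(A) dense in A, and let λ ∈ ℝ satisfy limsup_{t→∞} (log ‖T(t)‖_op)/t < λ. Set L_T := { u ∈ A : sup_{s>0} e^{−λs} ‖T(s)u‖ < +∞ } and ‖u‖_λ := max( ‖u‖ , sup_{s>0} e^{−λs} ‖T(s)u‖ ) for u ∈ L_T. Then: (a) L_T = { u ∈ A : limsup_{t→0⁺} ‖T(t)u‖ < +∞ }; (b) L_T is an ideal of A and (L_T, ‖·‖_λ) is a Banach algebra, i.e. ‖·‖_λ is complete on L_T and ‖uv‖_λ ≤ ‖u‖_λ ‖v‖_λ for u, v ∈ L_T; (c) for every multiplier R on A one has R(L_T) ⊆ L_T and ‖Ru‖_λ ≤ ‖R‖_op ‖u‖_λ; (d) there exist constants k, K > 0 such that k‖u‖_λ ≤ max(‖u‖, sup_{0<t≤1} ‖T(t)u‖) ≤ K‖u‖_λ for all u ∈ L_T, so the topology of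 (L_T, ‖·‖_λ) does not depend on the choice of λ. (Proposition 3.2, parts concerning L_T) -/
/-!
Banach–Steinhaus bounds `‖T s‖` on compact subintervals of `(0, ∞)`, and the hypothesis on `lam`
bounds it by `exp (lam * s)` for large `s`; so `‖T s‖ ≤ M * exp (lam * s)` for `s ≥ 1/2`.
Splitting `T s = T (s - 1/2) ∘ T (1/2)` then bounds the weighted orbit `exp (-lam s) * ‖T s u‖`
by a multiple of `sup_{0<t≤1} ‖T t u‖`, which gives (a) and (d). In a weakly cancellative algebra
every multiplier commutes with every `T t`, so multipliers, like right multiplications, are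
dominated on orbits, which gives (b) and (c). Completeness holds because the balls of `‖·‖_λ` are
closed in `A`.
-/

open Filter Topology Set

lemma eventually_le_exp_of_limsup_log_div_lt {a : ℝ → ℝ} {lam : ℝ} (ha : ∀ t, 0 ≤ a t)
    (h : limsup (fun t : ℝ => ((Real.log (a t) / t : ℝ) : EReal)) atTop < lam) :
    ∀ᶠ t in atTop, a t ≤ Real.exp (lam * t) := by
  filter_upwards [eventually_lt_of_limsup_lt h, eventually_gt_atTop 0] with t hlt ht
  rcases (ha t).eq_or_lt with h0 | h0
  · rw [← h0]; positivity
  · rw [EReal.coe_lt_coe_iff, div_lt_iff₀ ht] at hlt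
    exact (Real.log_le_iff_le_exp h0).mp hlt.le

lemma Real.exp_mul_le_exp_abs (x : ℝ) {s : ℝ} (hs : |s| ≤ 1) : Real.exp (x * s) ≤ Real.exp |x| :=
  Real.exp_le_exp.mpr <| (le_abs_self _).trans <| by
    rw [abs_mul]; exact mul_le_of_le_one_right (abs_nonneg x) hs

lemma exists_forall_opNorm_le_of_isCompact {X 𝕜 E F : Type*} [TopologicalSpace X]
    [NontriviallyNormedField 𝕜] [NormedAddCommGroup E] [NormedSpace 𝕜 E] [CompleteSpace E]
    [NormedAddCommGroup F] [NormedSpace 𝕜 F] {T : X → E →L[𝕜] F} {K : Set X}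
    (hK : IsCompact K) (hT : ∀ u, ContinuousOn (fun t => T t u) K) :
    ∃ C, ∀ t ∈ K, ‖T t‖ ≤ C := by
  obtain ⟨C, hC⟩ := banach_steinhaus (g := fun t : K => T t) fun u => by
    obtain ⟨C, hC⟩ := hK.exists_bound_of_continuousOn (hT u)
    exact ⟨C, fun t => hC t t.2⟩
  exact ⟨C, fun t ht => hC ⟨t, ht⟩⟩

section Growth

variable {𝕜 E : Type*} [NontriviallyNormedField 𝕜] [NormedAddCommGroup E] [NormedSpace 𝕜 E]

lemma exists_forall_ge_opNorm_le_mul_exp [CompleteSpace E] {T : ℝ → E →L[𝕜] E} {lam a : ℝ}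
    (ha : 0 < a) (hcont : ∀ u, ContinuousOn (fun t => T t u) (Ioi 0))
    (hlam : limsup (fun t : ℝ => ((Real.log ‖T t‖ / t : ℝ) : EReal)) atTop < lam) :
    ∃ M, ∀ s, a ≤ s → ‖T s‖ ≤ M * Real.exp (lam * s) := by
  obtain ⟨t₀, ht₀⟩ := eventually_atTop.mp
    (eventually_le_exp_of_limsup_log_div_lt (fun t => norm_nonneg (T t)) hlam)
  obtain ⟨C, hC⟩ := exists_forall_opNorm_le_of_isCompact (isCompact_Icc (a := a) (b := t₀))
    fun u => (hcont u).mono fun t ht => ha.trans_le ht.1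
  refine ⟨max 1 (C * Real.exp (|lam| * t₀)), fun s hs => ?_⟩
  rcases le_total s t₀ with hst | hst
  · have hC0 : 0 ≤ C := (norm_nonneg _).trans (hC s ⟨hs, hst⟩)
    have hexp : 1 ≤ Real.exp (|lam| * t₀ + lam * s) :=
      Real.one_le_exp (by nlinarith [neg_abs_le lam, abs_nonneg lam])
    calc ‖T s‖ ≤ C := hC s ⟨hs, hst⟩
      _ ≤ C * Real.exp (|lam| * t₀) * Real.exp (lam * s) := by
        rw [mul_assoc, ← Real.exp_add]; exact le_mul_of_one_le_right hC0 hexp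
      _ ≤ _ := by gcongr; exact le_max_right _ _
  · exact (ht₀ s hst).trans (le_mul_of_one_le_left (Real.exp_pos _).le (le_max_left _ _))

lemma exists_weighted_norm_le_of_forall_Ioc_le [CompleteSpace E] {T : ℝ → E →L[𝕜] E} {lam : ℝ}
    (hsg : ∀ s t : ℝ, 0 < s → 0 < t → T (s + t) = (T s).comp (T t))
    (hcont : ∀ u, ContinuousOn (fun t => T t u) (Ioi 0))
    (hlam : limsup (fun t : ℝ => ((Real.log ‖T t‖ / t : ℝ) : EReal)) atTop < lam) :
    ∃ c, 0 < c ∧ ∀ (u : E) (B : ℝ), (∀ t, 0 < t → t ≤ 1 → ‖T t u‖ ≤ B) →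
      ∀ s, 0 < s → Real.exp (-(lam * s)) * ‖T s u‖ ≤ c * B := by
  obtain ⟨M, hM⟩ := exists_forall_ge_opNorm_le_mul_exp one_half_pos hcont hlam
  refine ⟨max (Real.exp |lam|) (M * Real.exp (-(lam / 2))),
    lt_max_of_lt_left (Real.exp_pos _), fun u B hB s hs => ?_⟩
  have hB0 : 0 ≤ B := (norm_nonneg _).trans (hB 1 one_pos le_rfl)
  rcases le_or_gt s 1 with hs1 | hs1
  · have hexp : Real.exp (-(lam * s)) ≤ Real.exp |lam| := by
      rw [← neg_mul, ← abs_neg lam]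
      exact Real.exp_mul_le_exp_abs _ (by rw [abs_of_pos hs]; exact hs1)
    calc Real.exp (-(lam * s)) * ‖T s u‖ ≤ Real.exp |lam| * B :=
          mul_le_mul hexp (hB s hs hs1) (norm_nonneg _) (Real.exp_pos _).le
      _ ≤ _ := by gcongr; exact le_max_left _ _
  · have hsplit : T s u = T (s - 1 / 2) (T (1 / 2) u) := by
      rw [← ContinuousLinearMap.comp_apply, ← hsg _ _ (by linarith) one_half_pos, sub_add_cancel]
    calc Real.exp (-(lam * s)) * ‖T s u‖
        ≤ Real.exp (-(lam * s)) * (M * Real.exp (lam * (s - 1 / 2)) * B) := by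
          rw [hsplit]
          gcongr
          exact ((T _).le_opNorm _).trans
            (mul_le_mul (hM _ (by linarith)) (hB _ one_half_pos one_half_lt_one.le)
              (norm_nonneg _) ((norm_nonneg _).trans (hM _ (by linarith))))
      _ = M * Real.exp (-(lam / 2)) * B := by
          rw [mul_comm M, mul_assoc, ← mul_assoc (Real.exp _), ← Real.exp_add]; ring_nf
      _ ≤ _ := by gcongr; exact le_max_right _ _

end Growth

section GrowthSpace

variable {𝕜 E : Type*} [NontriviallyNormedField 𝕜] [NormedAddCommGroup E] [NormedSpace 𝕜 E]

def growthSpace (T : ℝ → E →L[𝕜] E) (lam : ℝ) : Set E :=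
  {u | ∃ C : ℝ, ∀ s : ℝ, 0 < s → Real.exp (-(lam * s)) * ‖T s u‖ ≤ C}

noncomputable def growthNorm (T : ℝ → E →L[𝕜] E) (lam : ℝ) (u : E) : ℝ :=
  max ‖u‖ (sSup {x : ℝ | ∃ s : ℝ, 0 < s ∧ x = Real.exp (-(lam * s)) * ‖T s u‖})

noncomputable def localOrbitNorm (T : ℝ → E →L[𝕜] E) (u : E) : ℝ :=
  max ‖u‖ (sSup {x : ℝ | ∃ t : ℝ, 0 < t ∧ t ≤ 1 ∧ x = ‖T t u‖})

variable {T : ℝ → E →L[𝕜] E} {lam : ℝ} {u v : E} {B : ℝ}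

lemma norm_le_growthNorm : ‖u‖ ≤ growthNorm T lam u := le_max_left _ _

lemma growthNorm_nonneg : 0 ≤ growthNorm T lam u := (norm_nonneg u).trans norm_le_growthNorm

lemma weighted_norm_le_growthNorm (hu : u ∈ growthSpace T lam) {s : ℝ} (hs : 0 < s) :
    Real.exp (-(lam * s)) * ‖T s u‖ ≤ growthNorm T lam u := by
  obtain ⟨C, hC⟩ := hu
  have hbdd : BddAbove {x : ℝ | ∃ s : ℝ, 0 < s ∧ x = Real.exp (-(lam * s)) * ‖T s u‖} := by
    refine ⟨C, ?_⟩
    rintro x ⟨s, hs, rfl⟩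
    exact hC s hs
  exact (le_csSup hbdd ⟨s, hs, rfl⟩).trans (le_max_right _ _)

lemma growthNorm_le (hu : ‖u‖ ≤ B) (h : ∀ s, 0 < s → Real.exp (-(lam * s)) * ‖T s u‖ ≤ B) :
    growthNorm T lam u ≤ B := by
  refine max_le hu (csSup_le ⟨_, 1, one_pos, rfl⟩ ?_)
  rintro x ⟨s, hs, rfl⟩
  exact h s hs

lemma norm_apply_le_growthNorm (hu : u ∈ growthSpace T lam) {t : ℝ} (ht : 0 < t) (ht1 : t ≤ 1) :
    ‖T t u‖ ≤ Real.exp |lam| * growthNorm T lam u := by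
  have hexp : Real.exp (lam * t) ≤ Real.exp |lam| :=
    Real.exp_mul_le_exp_abs _ (by rw [abs_of_pos ht]; exact ht1)
  calc ‖T t u‖ = Real.exp (lam * t) * (Real.exp (-(lam * t)) * ‖T t u‖) := by
        rw [← mul_assoc, ← Real.exp_add, add_neg_cancel, Real.exp_zero, one_mul]
    _ ≤ Real.exp |lam| * growthNorm T lam u :=
        mul_le_mul hexp (weighted_norm_le_growthNorm hu ht) (by positivity) (Real.exp_pos _).le

lemma sub_mem_growthSpace (hu : u ∈ growthSpace T lam) (hv : v ∈ growthSpace T lam) :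
    u - v ∈ growthSpace T lam := by
  obtain ⟨Cu, hCu⟩ := hu
  obtain ⟨Cv, hCv⟩ := hv
  refine ⟨Cu + Cv, fun s hs => ?_⟩
  calc Real.exp (-(lam * s)) * ‖T s (u - v)‖
      ≤ Real.exp (-(lam * s)) * ‖T s u‖ + Real.exp (-(lam * s)) * ‖T s v‖ := by
        rw [map_sub, ← mul_add]; gcongr; exact norm_sub_le _ _
    _ ≤ Cu + Cv := add_le_add (hCu s hs) (hCv s hs)

lemma mem_growthSpace_of_norm_apply_le {a : ℝ} (ha : 0 ≤ a) (hu : u ∈ growthSpace T lam)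
    (h : ∀ s, 0 < s → ‖T s v‖ ≤ a * ‖T s u‖) : v ∈ growthSpace T lam := by
  obtain ⟨C, hC⟩ := hu
  refine ⟨a * C, fun s hs => ?_⟩
  calc Real.exp (-(lam * s)) * ‖T s v‖ ≤ a * (Real.exp (-(lam * s)) * ‖T s u‖) := by
        rw [mul_left_comm]; gcongr; exact h s hs
    _ ≤ a * C := by gcongr; exact hC s hs

lemma growthNorm_le_of_norm_apply_le {a : ℝ} (ha : 0 ≤ a) (hu : u ∈ growthSpace T lam)
    (h₀ : ‖v‖ ≤ a * ‖u‖) (h : ∀ s, 0 < s → ‖T s v‖ ≤ a * ‖T s u‖) :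
    growthNorm T lam v ≤ a * growthNorm T lam u := by
  refine growthNorm_le (h₀.trans (by gcongr; exact norm_le_growthNorm)) fun s hs => ?_
  calc Real.exp (-(lam * s)) * ‖T s v‖ ≤ a * (Real.exp (-(lam * s)) * ‖T s u‖) := by
        rw [mul_left_comm]; gcongr; exact h s hs
    _ ≤ a * growthNorm T lam u := by gcongr; exact weighted_norm_le_growthNorm hu hs

lemma growthNorm_le_of_tendsto {x : ℕ → E} {y : E} (hx : Tendsto x atTop (𝓝 y))
    (hB : ∀ᶠ n in atTop, x n ∈ growthSpace T lam ∧ growthNorm T lam (x n) ≤ B) :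
    y ∈ growthSpace T lam ∧ growthNorm T lam y ≤ B := by
  have hweighted : ∀ s, 0 < s → Real.exp (-(lam * s)) * ‖T s y‖ ≤ B := fun s hs =>
    le_of_tendsto ((((T s).continuous.tendsto y).comp hx).norm.const_mul _) <| hB.mono
      fun n hn => (weighted_norm_le_growthNorm hn.1 hs).trans hn.2
  have hnorm : ‖y‖ ≤ B :=
    le_of_tendsto hx.norm <| hB.mono fun n hn => norm_le_growthNorm.trans hn.2
  exact ⟨⟨B, hweighted⟩, growthNorm_le hnorm hweighted⟩

lemma exists_tendsto_growthNorm_of_cauchy [CompleteSpace E] {x : ℕ → E}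
    (hx : ∀ n, x n ∈ growthSpace T lam)
    (hcauchy : ∀ ε : ℝ, 0 < ε → ∃ n₀ : ℕ, ∀ m ≥ n₀, ∀ n ≥ n₀, growthNorm T lam (x m - x n) < ε) :
    ∃ y ∈ growthSpace T lam, Tendsto (fun n => growthNorm T lam (x n - y)) atTop (𝓝 0) := by
  obtain ⟨y, hy⟩ : ∃ y, Tendsto x atTop (𝓝 y) :=
    cauchySeq_tendsto_of_complete <| Metric.cauchySeq_iff.mpr fun ε hε => by
      obtain ⟨n₀, h⟩ := hcauchy ε hε
      exact ⟨n₀, fun m hm n hn =>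
        (dist_eq_norm _ _).trans_lt (norm_le_growthNorm.trans_lt (h m hm n hn))⟩
  have hclose : ∀ ε : ℝ, 0 < ε → ∃ n₀ : ℕ, ∀ m ≥ n₀,
      x m - y ∈ growthSpace T lam ∧ growthNorm T lam (x m - y) ≤ ε := fun ε hε => by
    obtain ⟨n₀, h⟩ := hcauchy ε hε
    refine ⟨n₀, fun m hm => growthNorm_le_of_tendsto (tendsto_const_nhds.sub hy) ?_⟩
    filter_upwards [eventually_ge_atTop n₀] with n hn
    exact ⟨sub_mem_growthSpace (hx m) (hx n), (h m hm n hn).le⟩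
  obtain ⟨n₀, hn₀⟩ := hclose 1 one_pos
  refine ⟨y, by simpa using sub_mem_growthSpace (hx n₀) (hn₀ n₀ le_rfl).1, ?_⟩
  refine tendsto_order.mpr ⟨fun a ha => Eventually.of_forall fun n => ha.trans_le growthNorm_nonneg,
    fun a ha => ?_⟩
  obtain ⟨n₁, hn₁⟩ := hclose (a / 2) (half_pos ha)
  filter_upwards [eventually_ge_atTop n₁] with n hn
  exact (hn₁ n hn).2.trans_lt (half_lt_self ha)

lemma apply_mem_growthSpace {R : E →L[𝕜] E} (hRT : ∀ s, 0 < s → ∀ x, T s (R x) = R (T s x))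
    (hu : u ∈ growthSpace T lam) : R u ∈ growthSpace T lam :=
  mem_growthSpace_of_norm_apply_le (norm_nonneg R) hu fun s hs => by
    rw [hRT s hs]; exact R.le_opNorm _

lemma growthNorm_apply_le {R : E →L[𝕜] E} (hRT : ∀ s, 0 < s → ∀ x, T s (R x) = R (T s x))
    (hu : u ∈ growthSpace T lam) : growthNorm T lam (R u) ≤ ‖R‖ * growthNorm T lam u :=
  growthNorm_le_of_norm_apply_le (norm_nonneg R) hu (R.le_opNorm u) fun s hs => by
    rw [hRT s hs]; exact R.le_opNorm _

end GrowthSpace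

lemma exists_forall_Ioc_norm_le_of_eventually_le {F : Type*} [NormedAddCommGroup F] {f : ℝ → F}
    (hf : ContinuousOn f (Ioi 0)) (h : ∃ C, ∀ᶠ t in 𝓝[>] (0 : ℝ), ‖f t‖ ≤ C) :
    ∃ B, ∀ t, 0 < t → t ≤ 1 → ‖f t‖ ≤ B := by
  obtain ⟨C, hC⟩ := h
  obtain ⟨δ, hδ, hsub⟩ := mem_nhdsGT_iff_exists_Ioo_subset.mp hC
  obtain ⟨C', hC'⟩ := (isCompact_Icc (a := min δ 1) (b := 1)).exists_bound_of_continuousOn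
    (hf.mono fun t ht => lt_of_lt_of_le (lt_min hδ one_pos) ht.1)
  refine ⟨max C C', fun t ht ht1 => ?_⟩
  rcases lt_or_ge t (min δ 1) with hδt | hδt
  · exact (hsub ⟨ht, hδt.trans_le (min_le_left _ _)⟩).trans (le_max_left _ _)
  · exact (hC' t ⟨hδt, ht1⟩).trans (le_max_right _ _)

section GrowthSpaceOfSemigroup

variable {𝕜 E : Type*} [NontriviallyNormedField 𝕜] [NormedAddCommGroup E] [NormedSpace 𝕜 E]
  {T : ℝ → E →L[𝕜] E} {lam : ℝ}

lemma mem_growthSpace_iff_eventually_le [CompleteSpace E]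
    (hsg : ∀ s t : ℝ, 0 < s → 0 < t → T (s + t) = (T s).comp (T t))
    (hcont : ∀ u, ContinuousOn (fun t => T t u) (Ioi 0))
    (hlam : limsup (fun t : ℝ => ((Real.log ‖T t‖ / t : ℝ) : EReal)) atTop < lam) (u : E) :
    u ∈ growthSpace T lam ↔ ∃ C, ∀ᶠ t in 𝓝[>] (0 : ℝ), ‖T t u‖ ≤ C := by
  refine ⟨fun hu => ⟨Real.exp |lam| * growthNorm T lam u, ?_⟩, fun h => ?_⟩
  · filter_upwards [Ioo_mem_nhdsGT one_pos] with t ht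
    exact norm_apply_le_growthNorm hu ht.1 ht.2.le
  · obtain ⟨B, hB⟩ := exists_forall_Ioc_norm_le_of_eventually_le (hcont u) h
    obtain ⟨c, -, hc⟩ := exists_weighted_norm_le_of_forall_Ioc_le hsg hcont hlam
    exact ⟨c * B, hc u B hB⟩

lemma norm_apply_le_localOrbitNorm {u : E} (hu : u ∈ growthSpace T lam) {t : ℝ} (ht : 0 < t)
    (ht1 : t ≤ 1) : ‖T t u‖ ≤ localOrbitNorm T u := by
  have hbdd : BddAbove {x : ℝ | ∃ t : ℝ, 0 < t ∧ t ≤ 1 ∧ x = ‖T t u‖} := by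
    refine ⟨Real.exp |lam| * growthNorm T lam u, ?_⟩
    rintro x ⟨t, ht, ht1, rfl⟩
    exact norm_apply_le_growthNorm hu ht ht1
  exact (le_csSup hbdd ⟨t, ht, ht1, rfl⟩).trans (le_max_right _ _)

lemma localOrbitNorm_le_growthNorm {u : E} (hu : u ∈ growthSpace T lam) :
    localOrbitNorm T u ≤ Real.exp |lam| * growthNorm T lam u := by
  refine max_le (norm_le_growthNorm.trans
    (le_mul_of_one_le_left growthNorm_nonneg (Real.one_le_exp (abs_nonneg lam)))) ?_
  refine csSup_le ⟨_, 1, one_pos, le_rfl, rfl⟩ ?_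
  rintro x ⟨t, ht, ht1, rfl⟩
  exact norm_apply_le_growthNorm hu ht ht1

lemma exists_growthNorm_le_mul_localOrbitNorm [CompleteSpace E]
    (hsg : ∀ s t : ℝ, 0 < s → 0 < t → T (s + t) = (T s).comp (T t))
    (hcont : ∀ u, ContinuousOn (fun t => T t u) (Ioi 0))
    (hlam : limsup (fun t : ℝ => ((Real.log ‖T t‖ / t : ℝ) : EReal)) atTop < lam) :
    ∃ c, 0 < c ∧ ∀ u ∈ growthSpace T lam, growthNorm T lam u ≤ c * localOrbitNorm T u := by
  obtain ⟨c, -, hc⟩ := exists_weighted_norm_le_of_forall_Ioc_le hsg hcont hlam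
  refine ⟨max 1 c, lt_max_of_lt_left one_pos, fun u hu => ?_⟩
  have hloc : 0 ≤ localOrbitNorm T u := (norm_nonneg u).trans (le_max_left _ _)
  refine growthNorm_le ?_ fun s hs => ?_
  · exact (le_max_left _ _).trans (le_mul_of_one_le_left hloc (le_max_left _ _))
  · exact (hc u _ (fun t => norm_apply_le_localOrbitNorm hu) s hs).trans
      (by gcongr; exact le_max_right _ _)

end GrowthSpaceOfSemigroup

lemma multiplier_comm {A : Type*} [NonUnitalCommRing A] (hwc : ∀ u : A, u ≠ 0 → ∃ v : A, u * v ≠ 0)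
    {R S : A → A} (hR : ∀ x y, R (x * y) = R x * y) (hS : ∀ x y, S (x * y) = S x * y) (x : A) :
    R (S x) = S (R x) := by
  by_contra hne
  obtain ⟨y, hy⟩ := hwc _ (sub_ne_zero.mpr hne)
  have hRS : R (S x) * y = S x * R y := by
    rw [← hR (S x) y, mul_comm (S x) y, hR y (S x), mul_comm]
  have hSR : S (R x) * y = S x * R y := by
    rw [← hS (R x) y, ← hR x y, mul_comm x y, hR y x, mul_comm (R y) x, hS x (R y)]
  rw [sub_mul, hRS, hSR, sub_self] at hy
  exact hy rfl

section Multiplication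

variable {𝕜 A : Type*} [NontriviallyNormedField 𝕜] [NonUnitalNormedRing A] [NormedSpace 𝕜 A]
  {T : ℝ → A →L[𝕜] A} {lam : ℝ} {u : A}

lemma mul_mem_growthSpace (hmul : ∀ t : ℝ, 0 < t → ∀ u v : A, T t (u * v) = T t u * v)
    (hu : u ∈ growthSpace T lam) (v : A) : u * v ∈ growthSpace T lam :=
  mem_growthSpace_of_norm_apply_le (norm_nonneg v) hu fun s hs => by
    rw [hmul s hs, mul_comm ‖v‖]; exact norm_mul_le _ _

lemma growthNorm_mul_le (hmul : ∀ t : ℝ, 0 < t → ∀ u v : A, T t (u * v) = T t u * v)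
    (hu : u ∈ growthSpace T lam) (v : A) :
    growthNorm T lam (u * v) ≤ growthNorm T lam u * growthNorm T lam v := by
  calc growthNorm T lam (u * v) ≤ ‖v‖ * growthNorm T lam u :=
        growthNorm_le_of_norm_apply_le (norm_nonneg v) hu
          (by rw [mul_comm ‖v‖]; exact norm_mul_le _ _)
          fun s hs => by rw [hmul s hs, mul_comm ‖v‖]; exact norm_mul_le _ _
    _ ≤ growthNorm T lam u * growthNorm T lam v := by
        rw [mul_comm]; gcongr
        exacts [growthNorm_nonneg, norm_le_growthNorm]

end Multiplication

theorem statement1_general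
    {A : Type*} [NonUnitalNormedCommRing A] [NormedSpace ℂ A]
    [CompleteSpace A]
    (hwc : ∀ u : A, u ≠ 0 → ∃ v : A, u * v ≠ 0)
    (T : ℝ → A →L[ℂ] A)
    (hmul : ∀ t : ℝ, 0 < t → ∀ u v : A, T t (u * v) = T t u * v)
    (hsg : ∀ s t : ℝ, 0 < s → 0 < t → T (s + t) = (T s).comp (T t))
    (hcont : ∀ u : A, ContinuousOn (fun t : ℝ => T t u) (Set.Ioi 0))
    (lam : ℝ)
    (hlam : Filter.limsup (fun t : ℝ => ((Real.log ‖T t‖ / t : ℝ) : EReal)) Filter.atTop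
      < (lam : EReal))
    (L : Set A)
    (hL : L = {u : A | ∃ C : ℝ, ∀ s : ℝ, 0 < s → Real.exp (-(lam * s)) * ‖T s u‖ ≤ C})
    (N : A → ℝ)
    (hN : N = fun u : A =>
      max ‖u‖ (sSup {x : ℝ | ∃ s : ℝ, 0 < s ∧ x = Real.exp (-(lam * s)) * ‖T s u‖})) :
    -- (a) `L_T = { u : limsup_{t→0⁺} ‖T(t)u‖ < ∞ }`
    (∀ u : A, u ∈ L ↔ ∃ C : ℝ, ∀ᶠ t in 𝓝[>] (0 : ℝ), ‖T t u‖ ≤ C) ∧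
    -- (b) `L_T` is an ideal of `A` ...
    (∀ u ∈ L, ∀ v : A, u * v ∈ L) ∧
    -- ... and `‖·‖_λ` is submultiplicative on `L_T` ...
    (∀ u ∈ L, ∀ v ∈ L, N (u * v) ≤ N u * N v) ∧
    -- ... and `‖·‖_λ` is complete on `L_T`
    (∀ u : ℕ → A, (∀ n, u n ∈ L) →
      (∀ ε : ℝ, 0 < ε → ∃ n₀ : ℕ, ∀ m ≥ n₀, ∀ n ≥ n₀, N (u m - u n) < ε) →
      ∃ v ∈ L, Filter.Tendsto (fun n => N (u n - v)) Filter.atTop (𝓝 0)) ∧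
    -- (c) multipliers preserve `L_T`
    (∀ R : A →L[ℂ] A, (∀ x y : A, R (x * y) = R x * y) →
      ∀ u ∈ L, R u ∈ L ∧ N (R u) ≤ ‖R‖ * N u) ∧
    -- (d) the topology does not depend on the choice of `λ`
    (∃ k K : ℝ, 0 < k ∧ 0 < K ∧ ∀ u ∈ L,
      k * N u ≤ max ‖u‖ (sSup {x : ℝ | ∃ t : ℝ, 0 < t ∧ t ≤ 1 ∧ x = ‖T t u‖}) ∧
      max ‖u‖ (sSup {x : ℝ | ∃ t : ℝ, 0 < t ∧ t ≤ 1 ∧ x = ‖T t u‖}) ≤ K * N u) := by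
  subst hL hN
  have hcomm : ∀ R : A →L[ℂ] A, (∀ x y : A, R (x * y) = R x * y) →
      ∀ s, 0 < s → ∀ x, T s (R x) = R (T s x) :=
    fun R hR s hs => multiplier_comm hwc (hmul s hs) hR
  obtain ⟨c, hc, hc_le⟩ := exists_growthNorm_le_mul_localOrbitNorm hsg hcont hlam
  refine ⟨mem_growthSpace_iff_eventually_le hsg hcont hlam,
    fun u hu v => mul_mem_growthSpace hmul hu v,
    fun u hu v _ => growthNorm_mul_le hmul hu v,
    fun u hu hcauchy => exists_tendsto_growthNorm_of_cauchy hu hcauchy,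
    fun R hR u hu => ⟨apply_mem_growthSpace (hcomm R hR) hu, growthNorm_apply_le (hcomm R hR) hu⟩,
    c⁻¹, Real.exp |lam|, inv_pos.mpr hc, Real.exp_pos _,
    fun u hu => ⟨?_, localOrbitNorm_le_growthNorm hu⟩⟩
  rw [inv_mul_le_iff₀ hc]
  exact hc_le u hu

/-- Proposition 3.2, parts concerning `L_T`. -/
theorem statement1
    {A : Type*} [NonUnitalNormedCommRing A] [NormedSpace ℂ A]
    [IsScalarTower ℂ A A] [SMulCommClass ℂ A A] [CompleteSpace A]
    (hwc : ∀ u : A, u ≠ 0 → ∃ v : A, u * v ≠ 0)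
    (hdpi : ∃ u : A, DenseRange (fun v : A => u * v))
    (T : ℝ → A →L[ℂ] A)
    (hmul : ∀ t : ℝ, 0 < t → ∀ u v : A, T t (u * v) = T t u * v)
    (hsg : ∀ s t : ℝ, 0 < s → 0 < t → T (s + t) = (T s).comp (T t))
    (hcont : ∀ u : A, ContinuousOn (fun t : ℝ => T t u) (Set.Ioi 0))
    (hdense : Dense (⋃ t ∈ Set.Ioi (0 : ℝ), Set.range (T t)))
    (lam : ℝ)
    (hlam : Filter.limsup (fun t : ℝ => ((Real.log ‖T t‖ / t : ℝ) : EReal)) Filter.atTop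
      < (lam : EReal))
    (L : Set A)
    (hL : L = {u : A | ∃ C : ℝ, ∀ s : ℝ, 0 < s → Real.exp (-(lam * s)) * ‖T s u‖ ≤ C})
    (N : A → ℝ)
    (hN : N = fun u : A =>
      max ‖u‖ (sSup {x : ℝ | ∃ s : ℝ, 0 < s ∧ x = Real.exp (-(lam * s)) * ‖T s u‖})) :
    -- (a) `L_T = { u : limsup_{t→0⁺} ‖T(t)u‖ < ∞ }`
    (∀ u : A, u ∈ L ↔ ∃ C : ℝ, ∀ᶠ t in 𝓝[>] (0 : ℝ), ‖T t u‖ ≤ C) ∧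
    -- (b) `L_T` is an ideal of `A` ...
    (∀ u ∈ L, ∀ v : A, u * v ∈ L) ∧
    -- ... and `‖·‖_λ` is submultiplicative on `L_T` ...
    (∀ u ∈ L, ∀ v ∈ L, N (u * v) ≤ N u * N v) ∧
    -- ... and `‖·‖_λ` is complete on `L_T`
    (∀ u : ℕ → A, (∀ n, u n ∈ L) →
      (∀ ε : ℝ, 0 < ε → ∃ n₀ : ℕ, ∀ m ≥ n₀, ∀ n ≥ n₀, N (u m - u n) < ε) →
      ∃ v ∈ L, Filter.Tendsto (fun n => N (u n - v)) Filter.atTop (𝓝 0)) ∧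
    -- (c) multipliers preserve `L_T`
    (∀ R : A →L[ℂ] A, (∀ x y : A, R (x * y) = R x * y) →
      ∀ u ∈ L, R u ∈ L ∧ N (R u) ≤ ‖R‖ * N u) ∧
    -- (d) the topology does not depend on the choice of `λ`
    (∃ k K : ℝ, 0 < k ∧ 0 < K ∧ ∀ u ∈ L,
      k * N u ≤ max ‖u‖ (sSup {x : ℝ | ∃ t : ℝ, 0 < t ∧ t ≤ 1 ∧ x = ‖T t u‖}) ∧
      max ‖u‖ (sSup {x : ℝ | ∃ t : ℝ, 0 < t ∧ t ≤ 1 ∧ x = ‖T t u‖}) ≤ K * N u) :=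
  statement1_general hwc T hmul hsg hcont lam hlam L hL N hN
end

section
/- Let a < b ≤ a + π, let 𝔅 be a complex Banach algebra, let T : S_{a,b} → 𝔅 be a holomorphic semigroup, let a < α ≤ β < b, and let u ∈ 𝔅 satisfy limsup_{ζ→0, ζ∈S̄_{α,β}∖{0}} ‖T(ζ)u‖ < +∞. Set L := limsup_{r→∞} (log max(‖T(re^{iα})‖, ‖T(re^{iβ})‖))/r and assume L < +∞. If λ ∈ ℝ satisfies λ > L / cos((β−α)/2), then sup_{ζ ∈ S̄_{α,β}∖{0}} ‖ e^{−λ ζ e^{−i(α+β)/2}} T(ζ)u ‖ < +∞. (Lemma 4.1(i)) -/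
/-!
Restricted to a ray `r ↦ T (r e^{iθ})`, the semigroup is a one-parameter semigroup on `(0, ∞)`.
On the two boundary rays, `L < λ cos ψ` with `ψ = (β - α) / 2` gives `‖T (r e^{iθ})‖ ≤ e^{λ r cos ψ}`
for large `r`; writing `T (ρ e^{iθ}) u = T ((ρ - s) e^{iθ}) T (s e^{iθ}) u` with `s` small and using
the bound on `T ζ u` near `0` turns this into `‖T (ρ e^{iθ}) u‖ ≤ C e^{λ ρ cos ψ}` for all `ρ > 0`.
As `|e^{-λ ζ e^{-iγ}}| = e^{-λ ρ cos ψ}` on both boundary rays (`γ` the bisecting angle),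
`F ζ = e^{-λ ζ e^{-iγ}} T ζ u` is bounded there. Submultiplicativity and compactness give an a priori
bound `‖F ζ‖ ≤ A e^{K |ζ|}` on the sector, and since its opening `β - α` is less than `π`,
Phragmén–Lindelöf bounds `F` on the whole sector by its bound on the boundary.
-/

open Filter Topology Set

noncomputable section

/-- The closed sector `S̄_{a,b} = { r e^{iθ} : r ≥ 0, a ≤ θ ≤ b }` (a closed ray when `a = b`). -/
def closedSector (a b : ℝ) : Set ℂ :=
  {z : ℂ | ∃ r : ℝ, 0 ≤ r ∧ ∃ θ ∈ Set.Icc a b, z = (r : ℂ) * Complex.exp ((θ : ℂ) * Complex.I)}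

/-- The open sector `S_{a,b} = { r e^{iθ} : r > 0, a < θ < b }`. -/
def openSector (a b : ℝ) : Set ℂ :=
  {z : ℂ | ∃ r : ℝ, 0 < r ∧ ∃ θ ∈ Set.Ioo a b, z = (r : ℂ) * Complex.exp ((θ : ℂ) * Complex.I)}

open Complex

def ray (θ r : ℝ) : ℂ := r * exp (θ * I)

lemma norm_ray (θ : ℝ) {r : ℝ} (hr : 0 ≤ r) : ‖ray θ r‖ = r := by
  simp [ray, _root_.abs_of_nonneg hr]

lemma ray_ne_zero (θ : ℝ) {r : ℝ} (hr : 0 < r) : ray θ r ≠ 0 := by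
  intro h
  have := norm_ray θ hr.le
  rw [h, norm_zero] at this
  exact hr.ne this

lemma ray_add (θ s t : ℝ) : ray θ (s + t) = ray θ s + ray θ t := by
  simp only [ray]; push_cast; ring

lemma continuous_ray_uncurry : Continuous fun p : ℝ × ℝ => ray p.2 p.1 := by
  unfold ray; fun_prop

lemma continuous_ray (θ : ℝ) : Continuous (ray θ) := by
  unfold ray; fun_prop

lemma exp_eq_ray (w : ℂ) : exp w = ray w.im (Real.exp w.re) := by
  rw [ray, ofReal_exp, ← exp_add, re_add_im]

lemma exp_log_add_mul_I {r : ℝ} (hr : 0 < r) (θ : ℝ) : exp (Real.log r + θ * I) = ray θ r := by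
  rw [exp_add, ← ofReal_exp, Real.exp_log hr, ray]

lemma norm_exp_neg_mul_ray (c γ θ r : ℝ) :
    ‖exp (-(c : ℂ) * ray θ r * exp (-(γ : ℂ) * I))‖ = Real.exp (-(c * r * Real.cos (θ - γ))) := by
  have h : -(c : ℂ) * ray θ r * exp (-(γ : ℂ) * I) = ((-(c * r) : ℝ) : ℂ) * exp ((θ - γ : ℝ) * I) := by
    rw [ray, mul_assoc, mul_assoc, ← exp_add]; push_cast; ring_nf
  rw [h, norm_exp, re_ofReal_mul, exp_ofReal_mul_I_re]
  ring_nf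

lemma norm_exp_neg_mul_le (c γ : ℝ) (ζ : ℂ) :
    ‖exp (-(c : ℂ) * ζ * exp (-(γ : ℂ) * I))‖ ≤ Real.exp (|c| * ‖ζ‖) := by
  refine (norm_exp_le_exp_norm _).trans (le_of_eq ?_)
  rw [← ofReal_neg c, ← ofReal_neg γ, norm_mul, norm_mul, norm_exp_ofReal_mul_I, norm_real,
    Real.norm_eq_abs, abs_neg, mul_one]

lemma ray_mem_openSector {a b θ r : ℝ} (hθ : θ ∈ Ioo a b) (hr : 0 < r) : ray θ r ∈ openSector a b :=
  ⟨r, hr, θ, hθ, rfl⟩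

lemma ray_mem_closedSector_diff {α β θ r : ℝ} (hθ : θ ∈ Icc α β) (hr : 0 < r) :
    ray θ r ∈ closedSector α β \ {0} :=
  ⟨⟨r, hr.le, θ, hθ, rfl⟩, ray_ne_zero θ hr⟩

lemma exists_ray_of_mem_closedSector_diff {α β : ℝ} {ζ : ℂ} (h : ζ ∈ closedSector α β \ {0}) :
    ∃ r, 0 < r ∧ ∃ θ ∈ Icc α β, ζ = ray θ r := by
  obtain ⟨⟨r, hr, θ, hθ, rfl⟩, hne⟩ := h
  refine ⟨r, hr.lt_of_ne ?_, θ, hθ, rfl⟩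
  rintro rfl
  exact hne (by simp)

lemma closedSector_diff_subset_openSector {a b α β : ℝ} (hα : a < α) (hβ : β < b) :
    closedSector α β \ {0} ⊆ openSector a b := by
  intro ζ hζ
  obtain ⟨r, hr, θ, hθ, rfl⟩ := exists_ray_of_mem_closedSector_diff hζ
  exact ray_mem_openSector ⟨hα.trans_le hθ.1, hθ.2.trans_lt hβ⟩ hr

lemma openSector_subset_closedSector_diff (α β : ℝ) : openSector α β ⊆ closedSector α β \ {0} := by
  rintro _ ⟨r, hr, θ, hθ, rfl⟩
  exact ray_mem_closedSector_diff (Ioo_subset_Icc_self hθ) hr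

lemma eventually_ray_of_eventually_nhdsWithin {α β : ℝ} {p : ℂ → Prop}
    (h : ∀ᶠ ζ in 𝓝[closedSector α β \ {0}] 0, p ζ) :
    ∃ δ, 0 < δ ∧ ∀ θ ∈ Icc α β, ∀ s, 0 < s → s < δ → p (ray θ s) := by
  obtain ⟨δ, hδ, hball⟩ := Metric.mem_nhdsWithin_iff.1 h
  refine ⟨δ, hδ, fun θ hθ s hs hsδ => hball ⟨?_, ray_mem_closedSector_diff hθ hs⟩⟩
  rwa [Metric.mem_ball, dist_zero_right, norm_ray θ hs.le]

lemma exists_bound_on_annulus {E : Type*} [SeminormedAddCommGroup E] {g : ℂ → E} {s : Set ℂ}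
    (hg : ContinuousOn g s) {r₁ r₂ α β : ℝ}
    (hs : ∀ r ∈ Icc r₁ r₂, ∀ θ ∈ Icc α β, ray θ r ∈ s) :
    ∃ C, ∀ r ∈ Icc r₁ r₂, ∀ θ ∈ Icc α β, ‖g (ray θ r)‖ ≤ C := by
  have hK : IsCompact ((fun p : ℝ × ℝ => ray p.2 p.1) '' Icc r₁ r₂ ×ˢ Icc α β) :=
    (isCompact_Icc.prod isCompact_Icc).image continuous_ray_uncurry
  obtain ⟨C, hC⟩ := hK.exists_bound_of_continuousOn <| hg.mono <| by
    rintro _ ⟨⟨r, θ⟩, ⟨hr, hθ⟩, rfl⟩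
    exact hs r hr θ hθ
  exact ⟨C, fun r hr θ hθ => hC _ ⟨(r, θ), ⟨hr, hθ⟩, rfl⟩⟩

lemma eventually_le_exp_of_limsup_lt {x : ℝ → ℝ} {M : ℝ}
    (h : limsup (fun r => ((Real.log (x r) / r : ℝ) : EReal)) atTop < (M : EReal)) :
    ∀ᶠ r in atTop, x r ≤ Real.exp (M * r) := by
  filter_upwards [eventually_lt_of_limsup_lt h, eventually_gt_atTop 0] with r hr hr0
  rcases le_or_gt (x r) 0 with hx | hx
  · exact hx.trans (Real.exp_pos _).le
  · rw [EReal.coe_lt_coe_iff, div_lt_iff₀ hr0] at hr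
    exact ((Real.log_lt_iff_lt_exp hx).1 hr).le

lemma exists_norm_le_mul_exp_of_eventually {E : Type*} [SeminormedAddCommGroup E] {g : ℝ → E}
    {M r₀ : ℝ} (hgc : ContinuousOn g (Ici r₀)) (hg : ∀ᶠ r in atTop, ‖g r‖ ≤ Real.exp (M * r)) :
    ∃ A, 1 ≤ A ∧ ∀ r, r₀ ≤ r → ‖g r‖ ≤ A * Real.exp (M * r) := by
  obtain ⟨R, hR⟩ := eventually_atTop.1 hg
  obtain ⟨C, hC⟩ := isCompact_Icc.exists_bound_of_continuousOn
    (((hgc.mono Icc_subset_Ici_self).norm).mul (Real.continuous_exp.comp_continuousOn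
      (continuousOn_const.mul continuousOn_id)) : ContinuousOn
        (fun r => ‖g r‖ * Real.exp (-M * r)) (Icc r₀ R))
  refine ⟨max C 1, le_max_right _ _, fun r hr => ?_⟩
  rcases le_or_gt r R with hrR | hrR
  · have h := (le_abs_self _).trans ((Real.norm_eq_abs _).symm ▸ hC r ⟨hr, hrR⟩)
    calc ‖g r‖ = ‖g r‖ * Real.exp (-M * r) * Real.exp (M * r) := by
          rw [mul_assoc, ← Real.exp_add]; ring_nf; simp
      _ ≤ max C 1 * Real.exp (M * r) := by gcongr; exact h.trans (le_max_left _ _)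
  · calc ‖g r‖ ≤ 1 * Real.exp (M * r) := by rw [one_mul]; exact hR r hrR.le
      _ ≤ max C 1 * Real.exp (M * r) := by gcongr; exact le_max_right _ _

section OneParameterSemigroup

variable {R : Type*} [NonUnitalSeminormedRing R] {g : ℝ → R}

lemma norm_nat_mul_le_pow (hg : ∀ s t, 0 < s → 0 < t → g (s + t) = g s * g t) {σ : ℝ}
    (hσ : 0 < σ) {n : ℕ} (hn : 1 ≤ n) : ‖g (n * σ)‖ ≤ ‖g σ‖ ^ n := by
  induction n, hn using Nat.le_induction with
  | base => simp
  | succ n hn ih =>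
    have hnσ : 0 < (n : ℝ) * σ := mul_pos (Nat.cast_pos.2 hn) hσ
    rw [Nat.cast_succ, add_one_mul, hg _ _ hnσ hσ, pow_succ]
    exact (norm_mul_le _ _).trans (mul_le_mul_of_nonneg_right ih (norm_nonneg _))

lemma norm_le_exp_of_bounded_on_Icc (hg : ∀ s t, 0 < s → 0 < t → g (s + t) = g s * g t)
    {r₀ C ρ : ℝ} (hr₀ : 0 < r₀) (hC1 : 1 ≤ C) (hC : ∀ σ ∈ Icc r₀ (2 * r₀), ‖g σ‖ ≤ C)
    (hρ : r₀ ≤ ρ) : ‖g ρ‖ ≤ Real.exp (Real.log C / r₀ * ρ) := by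
  set n := ⌊ρ / r₀⌋₊
  have hn : 1 ≤ n := Nat.le_floor (by rw [Nat.cast_one, one_le_div hr₀]; exact hρ)
  have hn0 : (0 : ℝ) < n := Nat.cast_pos.2 hn
  have hnρ : (n : ℝ) ≤ ρ / r₀ := Nat.floor_le (div_nonneg (hr₀.le.trans hρ) hr₀.le)
  have hρn : ρ / r₀ < n + 1 := Nat.lt_floor_add_one _
  have hσ : ρ / n ∈ Icc r₀ (2 * r₀) := by
    rw [le_div_iff₀ hr₀] at hnρ
    rw [div_lt_iff₀ hr₀] at hρn
    constructor
    · rw [le_div_iff₀ hn0]; linarith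
    · rw [div_le_iff₀ hn0]; nlinarith [(Nat.one_le_cast (α := ℝ)).2 hn]
  calc ‖g ρ‖ = ‖g (n * (ρ / n))‖ := by rw [mul_div_cancel₀ _ hn0.ne']
    _ ≤ ‖g (ρ / n)‖ ^ n := norm_nat_mul_le_pow hg (div_pos (hr₀.trans_le hρ) hn0) hn
    _ ≤ C ^ n := pow_le_pow_left₀ (norm_nonneg _) (hC _ hσ) n
    _ = Real.exp (n * Real.log C) := by rw [Real.exp_nat_mul, Real.exp_log (by linarith)]
    _ ≤ Real.exp (Real.log C / r₀ * ρ) := by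
      rw [div_mul_eq_mul_div, mul_div_assoc, mul_comm]
      gcongr
      exact Real.log_nonneg hC1

lemma norm_mul_le_exp_of_split (hg : ∀ s t, 0 < s → 0 < t → g (s + t) = g s * g t) {u : R}
    {δ C₀ A K ρ : ℝ} (hδ : 0 < δ) (hA : 1 ≤ A) (hu : ∀ s, 0 < s → s < δ → ‖g s * u‖ ≤ C₀)
    (hgA : ∀ r, δ / 2 ≤ r → ‖g r‖ ≤ A * Real.exp (K * r)) (hρ : 0 < ρ) :
    ‖g ρ * u‖ ≤ A * C₀ * Real.exp (|K| * δ) * Real.exp (K * ρ) := by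
  have hC₀ : 0 ≤ C₀ := (norm_nonneg _).trans (hu (δ / 2) (by positivity) (by linarith))
  rw [mul_assoc, ← Real.exp_add]
  rcases lt_or_ge ρ δ with hρδ | hδρ
  · calc ‖g ρ * u‖ ≤ 1 * C₀ * 1 := by rw [one_mul, mul_one]; exact hu ρ hρ hρδ
      _ ≤ A * C₀ * Real.exp (|K| * δ + K * ρ) := by
        gcongr
        exact Real.one_le_exp (by nlinarith [abs_nonneg K, neg_abs_le K])
  · have hsplit : g ρ * u = g (ρ - δ / 2) * (g (δ / 2) * u) := by
      rw [← mul_assoc, ← hg _ _ (by linarith) (by linarith), sub_add_cancel]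
    calc ‖g ρ * u‖ ≤ ‖g (ρ - δ / 2)‖ * ‖g (δ / 2) * u‖ := hsplit ▸ norm_mul_le _ _
      _ ≤ A * Real.exp (K * (ρ - δ / 2)) * C₀ :=
        mul_le_mul (hgA _ (by linarith)) (hu _ (by positivity) (by linarith)) (norm_nonneg _)
          (mul_nonneg (by linarith) (Real.exp_pos _).le)
      _ ≤ A * C₀ * Real.exp (|K| * δ + K * ρ) := by
        rw [mul_right_comm]
        gcongr
        nlinarith [mul_le_mul_of_nonneg_right (neg_le_abs K) hδ.le, abs_nonneg K]

lemma exists_norm_mul_le_exp_of_eventually (hg : ∀ s t, 0 < s → 0 < t → g (s + t) = g s * g t)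
    (hgc : ContinuousOn g (Ioi 0)) {u : R} {δ C₀ M : ℝ} (hδ : 0 < δ)
    (hu : ∀ s, 0 < s → s < δ → ‖g s * u‖ ≤ C₀) (hgM : ∀ᶠ r in atTop, ‖g r‖ ≤ Real.exp (M * r)) :
    ∃ C, ∀ ρ, 0 < ρ → ‖g ρ * u‖ ≤ C * Real.exp (M * ρ) := by
  obtain ⟨A, hA, hgA⟩ :=
    exists_norm_le_mul_exp_of_eventually (hgc.mono (Ici_subset_Ioi.2 (half_pos hδ))) hgM
  exact ⟨_, fun ρ hρ => norm_mul_le_exp_of_split hg hδ hA hu hgA hρ⟩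

end OneParameterSemigroup

theorem PhragmenLindelof.sector {E : Type*} [NormedAddCommGroup E] [NormedSpace ℂ E] {F : ℂ → E}
    {α β A K C : ℝ} (hβα : β - α < Real.pi) (hd : DifferentiableOn ℂ F (openSector α β))
    (hc : ContinuousOn F (closedSector α β \ {0}))
    (hgrowth : ∀ ζ ∈ closedSector α β \ {0}, ‖F ζ‖ ≤ A * Real.exp (K * ‖ζ‖))
    (hα : ∀ r, 0 < r → ‖F (ray α r)‖ ≤ C) (hβ : ∀ r, 0 < r → ‖F (ray β r)‖ ≤ C) :
    ∀ ζ ∈ closedSector α β \ {0}, ‖F ζ‖ ≤ C := by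
  intro ζ hζ
  obtain ⟨r, hr, θ, hθ, rfl⟩ := exists_ray_of_mem_closedSector_diff hζ
  rcases le_or_gt β α with hβα' | hαβ
  · obtain rfl : θ = α := le_antisymm (hθ.2.trans hβα') hθ.1
    exact hα r hr
  have hA : 0 ≤ A := nonneg_of_mul_nonneg_left ((norm_nonneg _).trans (hgrowth _ hζ)) (Real.exp_pos _)
  have hexp : ∀ w : ℂ, w.im ∈ Icc α β → exp w ∈ closedSector α β \ {0} := fun w hw => by
    rw [exp_eq_ray]; exact ray_mem_closedSector_diff hw (Real.exp_pos _)
  -- On the strip, `F ∘ exp` grows at most like `exp (|K| exp |re w|)`: admissible, since the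
  -- width `β - α` is less than `π`.
  have hfd : DiffContOnCl ℂ (F ∘ exp) (im ⁻¹' Ioo α β) := by
    refine ⟨hd.comp differentiable_exp.differentiableOn fun w hw => ?_, ?_⟩
    · rw [exp_eq_ray]; exact ray_mem_openSector hw (Real.exp_pos _)
    · refine (hc.comp continuous_exp.continuousOn hexp).mono (closure_minimal ?_ ?_)
      · exact fun w hw => Ioo_subset_Icc_self hw
      · exact isClosed_Icc.preimage continuous_im
  have hB : ∃ c < Real.pi / (β - α), ∃ B, (F ∘ exp) =O[comap (_root_.abs ∘ re) atTop ⊓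
      𝓟 (im ⁻¹' Ioo α β)] fun w => Real.exp (B * Real.exp (c * |w.re|)) := by
    refine ⟨1, (one_lt_div (by linarith)).2 hβα, |K|, Asymptotics.IsBigO.of_bound A ?_⟩
    refine eventually_inf_principal.2 (Eventually.of_forall fun w hw => ?_)
    rw [Function.comp_apply, Real.norm_of_nonneg (Real.exp_pos _).le, one_mul]
    refine (hgrowth _ (hexp w (Ioo_subset_Icc_self hw))).trans ?_
    rw [norm_exp]
    gcongr <;> exact le_abs_self _
  have hbdry : ∀ θ₀, (∀ r, 0 < r → ‖F (ray θ₀ r)‖ ≤ C) → ∀ w : ℂ, w.im = θ₀ → ‖(F ∘ exp) w‖ ≤ C :=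
    fun θ₀ h w hw => by rw [Function.comp_apply, exp_eq_ray, hw]; exact h _ (Real.exp_pos _)
  have := PhragmenLindelof.horizontal_strip (z := Real.log r + θ * I) hfd hB (hbdry α hα)
    (hbdry β hβ) (by simpa using hθ.1) (by simpa using hθ.2)
  rwa [Function.comp_apply, exp_log_add_mul_I hr] at this

section SectorSemigroup

variable {B : Type*} [NonUnitalNormedRing B] {a b : ℝ} {T : ℂ → B}

lemma mul_ray_add (hsg : ∀ ζ ∈ openSector a b, ∀ ζ' ∈ openSector a b, T (ζ + ζ') = T ζ * T ζ')
    {θ : ℝ} (hθ : θ ∈ Ioo a b) (s t : ℝ) (hs : 0 < s) (ht : 0 < t) :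
    T (ray θ (s + t)) = T (ray θ s) * T (ray θ t) := by
  rw [ray_add, hsg _ (ray_mem_openSector hθ hs) _ (ray_mem_openSector hθ ht)]

lemma exists_norm_mul_le_exp_on_closedSector
    (hsg : ∀ ζ ∈ openSector a b, ∀ ζ' ∈ openSector a b, T (ζ + ζ') = T ζ * T ζ')
    (hTc : ContinuousOn T (openSector a b)) {α β : ℝ} (hα : a < α) (hβ : β < b) {u : B}
    {δ C₀ : ℝ} (hδ : 0 < δ) (hu : ∀ θ ∈ Icc α β, ∀ s, 0 < s → s < δ → ‖T (ray θ s) * u‖ ≤ C₀) :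
    ∃ A K, ∀ ζ ∈ closedSector α β \ {0}, ‖T ζ * u‖ ≤ A * Real.exp (K * ‖ζ‖) := by
  have hIoo : ∀ θ ∈ Icc α β, θ ∈ Ioo a b := fun θ hθ => ⟨hα.trans_le hθ.1, hθ.2.trans_lt hβ⟩
  obtain ⟨C, hC⟩ := exists_bound_on_annulus hTc (r₁ := δ / 2) (r₂ := 2 * (δ / 2)) (α := α)
    (β := β) fun r hr θ hθ => ray_mem_openSector (hIoo θ hθ) ((half_pos hδ).trans_le hr.1)
  set K := Real.log (max C 1) / (δ / 2)
  refine ⟨1 * C₀ * Real.exp (|K| * δ), K, fun ζ hζ => ?_⟩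
  obtain ⟨ρ, hρ, θ, hθ, rfl⟩ := exists_ray_of_mem_closedSector_diff hζ
  have hg := mul_ray_add hsg (hIoo θ hθ)
  rw [norm_ray θ hρ.le]
  refine norm_mul_le_exp_of_split hg hδ le_rfl (hu θ hθ) (fun r hr => ?_) hρ
  rw [one_mul]
  exact norm_le_exp_of_bounded_on_Icc hg (half_pos hδ) (le_max_right _ _)
    (fun σ hσ => (hC σ hσ θ hθ).trans (le_max_left _ _)) hr

variable [NormedSpace ℂ B]

lemma exists_norm_exp_smul_le_on_ray
    (hsg : ∀ ζ ∈ openSector a b, ∀ ζ' ∈ openSector a b, T (ζ + ζ') = T ζ * T ζ')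
    (hTc : ContinuousOn T (openSector a b)) {θ γ lam : ℝ} (hθ : θ ∈ Ioo a b) {u : B}
    {δ C₀ : ℝ} (hδ : 0 < δ) (hu : ∀ s, 0 < s → s < δ → ‖T (ray θ s) * u‖ ≤ C₀)
    (hgrowth : ∀ᶠ r in atTop, ‖T (ray θ r)‖ ≤ Real.exp (lam * Real.cos (θ - γ) * r)) :
    ∃ C, ∀ r, 0 < r → ‖exp (-(lam : ℂ) * ray θ r * exp (-(γ : ℂ) * I)) • (T (ray θ r) * u)‖ ≤ C := by
  obtain ⟨C, hC⟩ := exists_norm_mul_le_exp_of_eventually (mul_ray_add hsg hθ)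
    (hTc.comp (continuous_ray θ).continuousOn fun r hr => ray_mem_openSector hθ hr) hδ hu hgrowth
  refine ⟨C, fun r hr => ?_⟩
  rw [norm_smul, norm_exp_neg_mul_ray]
  calc _ ≤ Real.exp (-(lam * r * Real.cos (θ - γ))) *
        (C * Real.exp (lam * Real.cos (θ - γ) * r)) := by gcongr; exact hC r hr
    _ = C := by rw [mul_left_comm, ← Real.exp_add]; ring_nf; simp

end SectorSemigroup

theorem statement2_general
    {B : Type*} [NonUnitalNormedRing B] [NormedSpace ℂ B]
    [IsScalarTower ℂ B B] [SMulCommClass ℂ B B]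
    (a b : ℝ) (hba : b ≤ a + Real.pi)
    (T : ℂ → B)
    (hT : DifferentiableOn ℂ T (openSector a b))
    (hsg : ∀ ζ ∈ openSector a b, ∀ ζ' ∈ openSector a b, T (ζ + ζ') = T ζ * T ζ')
    (α β : ℝ) (hαa : a < α) (hαβ : α ≤ β) (hβb : β < b)
    (u : B)
    (hu : ∃ C : ℝ, ∀ᶠ ζ in 𝓝[closedSector α β \ {0}] (0 : ℂ), ‖T ζ * u‖ ≤ C)
    (L : EReal)
    (hLdef : L = Filter.limsup
      (fun r : ℝ =>
        ((Real.log (max ‖T ((r : ℂ) * Complex.exp ((α : ℂ) * Complex.I))‖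
            ‖T ((r : ℂ) * Complex.exp ((β : ℂ) * Complex.I))‖) / r : ℝ) : EReal))
      Filter.atTop)
    (lam : ℝ)
    (hlam : L < ((lam * Real.cos ((β - α) / 2) : ℝ) : EReal)) :
    ∃ C : ℝ, ∀ ζ ∈ closedSector α β \ {0},
      ‖Complex.exp (-(lam : ℂ) * ζ * Complex.exp (-(((α + β) / 2 : ℝ) : ℂ) * Complex.I)) •
        (T ζ * u)‖ ≤ C := by
  obtain ⟨C₀, hC₀⟩ := hu
  obtain ⟨δ, hδ, hnear⟩ := eventually_ray_of_eventually_nhdsWithin hC₀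
  have hIoo : ∀ θ ∈ Icc α β, θ ∈ Ioo a b := fun θ hθ => ⟨hαa.trans_le hθ.1, hθ.2.trans_lt hβb⟩
  have hTc := hT.continuousOn
  have hsub := closedSector_diff_subset_openSector hαa hβb
  have hgrowth := eventually_le_exp_of_limsup_lt (hLdef ▸ hlam)
  have hα : α ∈ Icc α β := ⟨le_rfl, hαβ⟩
  have hβ : β ∈ Icc α β := ⟨hαβ, le_rfl⟩
  obtain ⟨Cα, hCα⟩ := exists_norm_exp_smul_le_on_ray hsg hTc (hIoo α hα) hδ (hnear α hα)
    (γ := (α + β) / 2) (lam := lam) <| by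
      filter_upwards [hgrowth] with r hr
      rw [show α - (α + β) / 2 = -((β - α) / 2) by ring, Real.cos_neg]
      exact (le_max_left _ _).trans hr
  obtain ⟨Cβ, hCβ⟩ := exists_norm_exp_smul_le_on_ray hsg hTc (hIoo β hβ) hδ (hnear β hβ)
    (γ := (α + β) / 2) (lam := lam) <| by
      filter_upwards [hgrowth] with r hr
      rw [show β - (α + β) / 2 = (β - α) / 2 by ring]
      exact (le_max_right _ _).trans hr
  obtain ⟨A, K, hAK⟩ := exists_norm_mul_le_exp_on_closedSector hsg hTc hαa hβb hδ hnear
  have hd : DifferentiableOn ℂ (fun ζ => T ζ * u) (openSector a b) :=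
    ((ContinuousLinearMap.mul ℂ B).flip u).differentiable.comp_differentiableOn hT
  refine ⟨max Cα Cβ, PhragmenLindelof.sector (A := A) (K := |lam| + K) (by linarith)
    ((by fun_prop : Differentiable ℂ _).differentiableOn.smul
      (hd.mono ((openSector_subset_closedSector_diff α β).trans hsub)))
    (((by fun_prop : Continuous _).continuousOn.smul (hd.continuousOn.mono hsub)))
    (fun ζ hζ => ?_) (fun r hr => (hCα r hr).trans (le_max_left _ _))
    (fun r hr => (hCβ r hr).trans (le_max_right _ _))⟩
  rw [norm_smul, add_mul, Real.exp_add, mul_left_comm]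
  exact mul_le_mul (norm_exp_neg_mul_le _ _ _) (hAK ζ hζ) (norm_nonneg _) (Real.exp_pos _).le

/-- Lemma 4.1(i). -/
theorem statement2
    {B : Type*} [NonUnitalNormedRing B] [NormedSpace ℂ B]
    [IsScalarTower ℂ B B] [SMulCommClass ℂ B B] [CompleteSpace B]
    (a b : ℝ) (hab : a < b) (hba : b ≤ a + Real.pi)
    (T : ℂ → B)
    (hT : DifferentiableOn ℂ T (openSector a b))
    (hsg : ∀ ζ ∈ openSector a b, ∀ ζ' ∈ openSector a b, T (ζ + ζ') = T ζ * T ζ')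
    (α β : ℝ) (hαa : a < α) (hαβ : α ≤ β) (hβb : β < b)
    (u : B)
    (hu : ∃ C : ℝ, ∀ᶠ ζ in 𝓝[closedSector α β \ {0}] (0 : ℂ), ‖T ζ * u‖ ≤ C)
    (L : EReal)
    (hLdef : L = Filter.limsup
      (fun r : ℝ =>
        ((Real.log (max ‖T ((r : ℂ) * Complex.exp ((α : ℂ) * Complex.I))‖
            ‖T ((r : ℂ) * Complex.exp ((β : ℂ) * Complex.I))‖) / r : ℝ) : EReal))
      Filter.atTop)
    (hLtop : L < ⊤)
    (lam : ℝ)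
    (hlam : L < ((lam * Real.cos ((β - α) / 2) : ℝ) : EReal)) :
    ∃ C : ℝ, ∀ ζ ∈ closedSector α β \ {0},
      ‖Complex.exp (-(lam : ℂ) * ζ * Complex.exp (-(((α + β) / 2 : ℝ) : ℂ) * Complex.I)) •
        (T ζ * u)‖ ≤ C :=
  statement2_general a b hba T hT hsg α β hαa hαβ hβb u hu L hLdef lam hlam
end
end

section
/- Let a < b ≤ a + π, let 𝔅 be a complex Banach algebra, let T : S_{a,b} → 𝔅 be a holomorphic semigroup, let a < α ≤ β < b, and let u ∈ 𝔅 satisfy limsup_{ζ→0, ζ∈S̄_{α,β}∖{0}} ‖T(ζ)u‖ < +∞. Assume limsup_{r→∞} (log max(‖T(re^{iα})‖, ‖T(re^{iβ})‖))/r < +∞. Then limsup_{λ→+∞} [ sup_{ζ ∈ S̄_{α,β}∖{0}} ‖ e^{−λ ζ e^{−i(α+β)/2}} T(ζ)u ‖ ] = limsup_{ζ→0, ζ∈S̄_{α,β}∖{0}} ‖T(ζ)u‖. (Lemma 4.1(ii)) -/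
open Filter Topology Set
open scoped ENNReal NNReal

/-!
Upper bound: the semigroup law gives `T ζ = T (ζ / 2) ^ 2`, so the bound of `‖T‖` on the
compact piece `δ ≤ ‖ζ‖ ≤ 2δ` of the sector propagates to exponential growth `‖T ζ‖ ≤ e^{K‖ζ‖}`.
Writing `T ζ u = T ζ₁ (T ζ₂ u)` with `ζ₂` on the ray of `ζ` close to `0` then bounds `‖T ζ u‖`
by `e^{K‖ζ‖}` times its values near `0`, while on the sector
`|e^{-λζω}| ≤ e^{-λ cos((β - α)/2) ‖ζ‖}` with `ω = e^{-i(α+β)/2}` and `cos((β - α)/2) > 0`;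
for `λ ≥ K / cos((β - α)/2)` the decay wins.
Lower bound: `T ζ u = e^{λζω} • (e^{-λζω} • T ζ u)` and `e^{λζω} → 1` as `ζ → 0`, for every `λ`.
-/

noncomputable section

section Sector

variable {α β : ℝ}

lemma norm_ofReal_mul_exp_mul_I {r : ℝ} (hr : 0 ≤ r) (θ : ℝ) :
    ‖(r : ℂ) * Complex.exp ((θ : ℂ) * Complex.I)‖ = r := by
  rw [norm_mul, Complex.norm_exp_ofReal_mul_I, mul_one, Complex.norm_of_nonneg hr]

lemma exists_eq_norm_mul_exp_of_mem_closedSector {ζ : ℂ} (hζ : ζ ∈ closedSector α β) :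
    ∃ θ ∈ Icc α β, ζ = (‖ζ‖ : ℂ) * Complex.exp ((θ : ℂ) * Complex.I) := by
  obtain ⟨r, hr, θ, hθ, rfl⟩ := hζ
  exact ⟨θ, hθ, by rw [norm_ofReal_mul_exp_mul_I hr]⟩

lemma ofReal_mul_mem_closedSector_diff_zero {t : ℝ} (ht : 0 < t) {ζ : ℂ}
    (hζ : ζ ∈ closedSector α β \ {0}) : (t : ℂ) * ζ ∈ closedSector α β \ {0} := by
  obtain ⟨⟨r, hr, θ, hθ, rfl⟩, hne⟩ := hζ
  refine ⟨⟨t * r, mul_nonneg ht.le hr, θ, hθ, by push_cast; ring⟩, ?_⟩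
  exact mul_ne_zero (Complex.ofReal_ne_zero.2 ht.ne') hne

lemma closedSector_diff_zero_subset_openSector {a b : ℝ} (hαa : a < α) (hβb : β < b) :
    closedSector α β \ {0} ⊆ openSector a b := by
  rintro _ ⟨⟨r, hr, θ, hθ, rfl⟩, hne⟩
  have hr0 : r ≠ 0 := by rintro rfl; simp at hne
  exact ⟨r, hr.lt_of_ne' hr0, θ, ⟨hαa.trans_le hθ.1, hθ.2.trans_lt hβb⟩, rfl⟩

lemma isCompact_closedSector_inter_closedBall (R : ℝ) :
    IsCompact (closedSector α β ∩ Metric.closedBall 0 R) := by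
  have hpolar : closedSector α β ∩ Metric.closedBall 0 R =
      (fun p : ℝ × ℝ => (p.1 : ℂ) * Complex.exp ((p.2 : ℂ) * Complex.I)) ''
        (Icc 0 R ×ˢ Icc α β) := by
    ext ζ
    constructor
    · rintro ⟨⟨r, hr, θ, hθ, rfl⟩, hR⟩
      rw [mem_closedBall_zero_iff, norm_ofReal_mul_exp_mul_I hr] at hR
      exact ⟨(r, θ), ⟨⟨hr, hR⟩, hθ⟩, rfl⟩
    · rintro ⟨⟨r, θ⟩, ⟨⟨hr, hR⟩, hθ⟩, rfl⟩
      refine ⟨⟨r, hr, θ, hθ, rfl⟩, ?_⟩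
      rwa [mem_closedBall_zero_iff, norm_ofReal_mul_exp_mul_I hr]
  rw [hpolar]
  exact (isCompact_Icc.prod isCompact_Icc).image (by fun_prop)

lemma cos_mul_norm_le_re_mul_exp (hβα : β - α ≤ 2 * Real.pi) {ζ : ℂ}
    (hζ : ζ ∈ closedSector α β) :
    Real.cos ((β - α) / 2) * ‖ζ‖
      ≤ (ζ * Complex.exp (-(((α + β) / 2 : ℝ) : ℂ) * Complex.I)).re := by
  obtain ⟨θ, ⟨hαθ, hθβ⟩, hζeq⟩ := exists_eq_norm_mul_exp_of_mem_closedSector hζ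
  have hrot : ζ * Complex.exp (-(((α + β) / 2 : ℝ) : ℂ) * Complex.I)
      = (‖ζ‖ : ℂ) * Complex.exp (((θ - (α + β) / 2 : ℝ) : ℂ) * Complex.I) := by
    rw [hζeq, norm_ofReal_mul_exp_mul_I (norm_nonneg ζ), mul_assoc, ← Complex.exp_add]
    push_cast
    ring_nf
  rw [hrot, Complex.re_ofReal_mul, Complex.exp_ofReal_mul_I_re, mul_comm]
  refine mul_le_mul_of_nonneg_left ?_ (norm_nonneg ζ)
  rw [← Real.cos_abs (θ - _)]
  exact Real.cos_le_cos_of_nonneg_of_le_pi (abs_nonneg _) (by linarith)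
    (abs_le.2 ⟨by linarith, by linarith⟩)

lemma norm_exp_neg_mul_le_s3 (hβα : β - α ≤ 2 * Real.pi) {ζ : ℂ} (hζ : ζ ∈ closedSector α β)
    {t : ℝ} (ht : 0 ≤ t) :
    ‖Complex.exp (-(t : ℂ) * ζ * Complex.exp (-(((α + β) / 2 : ℝ) : ℂ) * Complex.I))‖
      ≤ Real.exp (-(t * (Real.cos ((β - α) / 2) * ‖ζ‖))) := by
  rw [Complex.norm_exp, Real.exp_le_exp, mul_assoc, neg_mul, Complex.neg_re,
    Complex.re_ofReal_mul, neg_le_neg_iff]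
  exact mul_le_mul_of_nonneg_left (cos_mul_norm_le_re_mul_exp hβα hζ) ht

end Sector

lemma limsup_nnnorm_le_iSup_nnnorm_exp_smul {E : Type*} [NormedAddCommGroup E]
    [NormedSpace ℂ E] (S : Set ℂ) (F : ℂ → E) (ω : ℂ) (t : ℝ) :
    limsup (fun ζ => (‖F ζ‖₊ : ℝ≥0∞)) (𝓝[S] 0)
      ≤ ⨆ ζ ∈ S, (‖Complex.exp (-(t : ℂ) * ζ * ω) • F ζ‖₊ : ℝ≥0∞) := by
  set M := ⨆ ζ ∈ S, (‖Complex.exp (-(t : ℂ) * ζ * ω) • F ζ‖₊ : ℝ≥0∞)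
  rcases (𝓝[S] (0 : ℂ)).eq_or_neBot with hbot | hne
  · simp [hbot]
  have hlim : Tendsto (fun ζ : ℂ => (‖Complex.exp ((t : ℂ) * ζ * ω)‖₊ : ℝ≥0∞) * M)
      (𝓝[S] 0) (𝓝 M) := by
    have hcont : Continuous fun ζ : ℂ => (‖Complex.exp ((t : ℂ) * ζ * ω)‖₊ : ℝ≥0∞) := by
      fun_prop
    simpa using ENNReal.Tendsto.mul_const ((hcont.tendsto 0).mono_left nhdsWithin_le_nhds)
      (Or.inl (by simp))
  refine (limsup_le_limsup ?_).trans_eq hlim.limsup_eq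
  filter_upwards [self_mem_nhdsWithin] with ζ hζ
  have hF : F ζ = Complex.exp ((t : ℂ) * ζ * ω) • Complex.exp (-(t : ℂ) * ζ * ω) • F ζ := by
    rw [smul_smul, ← Complex.exp_add, ← add_mul, ← add_mul, add_neg_cancel, zero_mul, zero_mul,
      Complex.exp_zero, one_smul]
  calc (‖F ζ‖₊ : ℝ≥0∞)
      = ‖Complex.exp ((t : ℂ) * ζ * ω)‖₊ * ‖Complex.exp (-(t : ℂ) * ζ * ω) • F ζ‖₊ := by
        conv_lhs => rw [hF]
        rw [nnnorm_smul, ENNReal.coe_mul]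
    _ ≤ ‖Complex.exp ((t : ℂ) * ζ * ω)‖₊ * M := by
        gcongr
        exact le_iSup₂ (f := fun ζ (_ : ζ ∈ S) =>
          (‖Complex.exp (-(t : ℂ) * ζ * ω) • F ζ‖₊ : ℝ≥0∞)) ζ hζ

section Semigroup

variable {B : Type*} [NonUnitalNormedRing B] {α β : ℝ} {T : ℂ → B}

lemma exists_norm_le_exp_mul_norm
    (hmul : ∀ ζ ∈ closedSector α β \ {0}, ∀ ζ' ∈ closedSector α β \ {0},
      T (ζ + ζ') = T ζ * T ζ')
    (hcont : ContinuousOn T (closedSector α β \ {0})) {δ : ℝ} (hδ : 0 < δ) :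
    ∃ K, 0 ≤ K ∧ ∀ ζ ∈ closedSector α β \ {0}, δ ≤ ‖ζ‖ → ‖T ζ‖ ≤ Real.exp (K * ‖ζ‖) := by
  have hannulus : IsCompact (closedSector α β ∩ Metric.closedBall 0 (2 * δ) ∩ {z | δ ≤ ‖z‖}) :=
    (isCompact_closedSector_inter_closedBall _).inter_right
      (isClosed_le continuous_const continuous_norm)
  obtain ⟨M, hM⟩ := hannulus.exists_bound_of_continuousOn <| hcont.mono
    fun z ⟨⟨hz, _⟩, hδz⟩ => ⟨hz, by simpa using (hδ.trans_le hδz).ne'⟩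
  set K := Real.log (max M 1) / δ
  have hK : 0 ≤ K := div_nonneg (Real.log_nonneg (le_max_right _ _)) hδ.le
  have hbase : ∀ ζ ∈ closedSector α β \ {0}, δ ≤ ‖ζ‖ → ‖ζ‖ ≤ 2 * δ →
      ‖T ζ‖ ≤ Real.exp (K * ‖ζ‖) := fun ζ hζ hδζ hζδ =>
    calc ‖T ζ‖ ≤ max M 1 := (hM ζ ⟨⟨hζ.1, by simpa using hζδ⟩, hδζ⟩).trans (le_max_left _ _)
      _ = Real.exp (K * δ) := by
        rw [div_mul_cancel₀ _ hδ.ne', Real.exp_log (by positivity)]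
      _ ≤ Real.exp (K * ‖ζ‖) := Real.exp_le_exp.2 (mul_le_mul_of_nonneg_left hδζ hK)
  have hdouble : ∀ n : ℕ, ∀ ζ ∈ closedSector α β \ {0}, δ ≤ ‖ζ‖ → ‖ζ‖ ≤ 2 ^ (n + 1) * δ →
      ‖T ζ‖ ≤ Real.exp (K * ‖ζ‖) := by
    intro n
    induction n with
    | zero => simpa using hbase
    | succ n ih =>
      intro ζ hζ hδζ hζn
      by_cases hsmall : ‖ζ‖ ≤ 2 * δ
      · exact hbase ζ hζ hδζ hsmall
      set η := ((1 / 2 : ℝ) : ℂ) * ζ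
      have hη : η ∈ closedSector α β \ {0} := ofReal_mul_mem_closedSector_diff_zero (by norm_num) hζ
      have hηnorm : ‖η‖ = ‖ζ‖ / 2 := by
        rw [norm_mul, Complex.norm_of_nonneg (by norm_num)]; ring
      rw [pow_succ] at hζn
      have hTη := ih η hη (by rw [hηnorm]; linarith) (by rw [hηnorm]; linarith)
      calc ‖T ζ‖ = ‖T η * T η‖ := by rw [← hmul η hη η hη]; congr 2; push_cast [η]; ring
        _ ≤ ‖T η‖ * ‖T η‖ := norm_mul_le _ _
        _ ≤ Real.exp (K * ‖η‖) * Real.exp (K * ‖η‖) := by gcongr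
        _ = Real.exp (K * ‖ζ‖) := by rw [← Real.exp_add, hηnorm]; ring_nf
  refine ⟨K, hK, fun ζ hζ hδζ => ?_⟩
  obtain ⟨n, hn⟩ := pow_unbounded_of_one_lt (‖ζ‖ / δ) (one_lt_two (α := ℝ))
  refine hdouble n ζ hζ hδζ ?_
  rw [div_lt_iff₀ hδ] at hn
  nlinarith [pow_succ (2 : ℝ) n, pow_pos (two_pos (α := ℝ)) n]

lemma exists_norm_mul_le_exp_mul
    (hmul : ∀ ζ ∈ closedSector α β \ {0}, ∀ ζ' ∈ closedSector α β \ {0},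
      T (ζ + ζ') = T ζ * T ζ')
    (hcont : ContinuousOn T (closedSector α β \ {0})) {u : B} {δ C : ℝ} (hδ : 0 < δ)
    (hC : ∀ ζ ∈ closedSector α β \ {0}, ‖ζ‖ < δ → ‖T ζ * u‖ ≤ C) :
    ∃ K, 0 ≤ K ∧ ∀ ζ ∈ closedSector α β \ {0}, ‖T ζ * u‖ ≤ Real.exp (K * ‖ζ‖) * C := by
  obtain ⟨K, hK, hgrowth⟩ := exists_norm_le_exp_mul_norm hmul hcont (half_pos hδ)
  refine ⟨K, hK, fun ζ hζ => ?_⟩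
  have hexp : 1 ≤ Real.exp (K * ‖ζ‖) := Real.one_le_exp (by positivity)
  by_cases hnear : ‖ζ‖ < δ
  · have hC0 : 0 ≤ C := (norm_nonneg _).trans (hC ζ hζ hnear)
    exact (hC ζ hζ hnear).trans (le_mul_of_one_le_left hC0 hexp)
  push Not at hnear
  have hζ0 : 0 < ‖ζ‖ := hδ.trans_le hnear
  set s := δ / 2 / ‖ζ‖
  have hs0 : 0 < s := by positivity
  have hs1 : s < 1 := by rw [div_lt_one hζ0]; linarith
  set ζ₁ := ((1 - s : ℝ) : ℂ) * ζ
  set ζ₂ := ((s : ℝ) : ℂ) * ζ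
  have hζ₁ : ζ₁ ∈ closedSector α β \ {0} := ofReal_mul_mem_closedSector_diff_zero (by linarith) hζ
  have hζ₂ : ζ₂ ∈ closedSector α β \ {0} := ofReal_mul_mem_closedSector_diff_zero hs0 hζ
  have hζ₂norm : ‖ζ₂‖ = δ / 2 := by
    rw [norm_mul, Complex.norm_of_nonneg hs0.le, div_mul_cancel₀ _ hζ0.ne']
  have hζ₁norm : ‖ζ₁‖ = ‖ζ‖ - δ / 2 := by
    rw [norm_mul, Complex.norm_of_nonneg (by linarith), sub_mul, one_mul,
      div_mul_cancel₀ _ hζ0.ne']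
  have hC₂ := hC ζ₂ hζ₂ (by rw [hζ₂norm]; linarith)
  have hC0 : 0 ≤ C := (norm_nonneg _).trans hC₂
  calc ‖T ζ * u‖ = ‖T ζ₁ * (T ζ₂ * u)‖ := by
        rw [← mul_assoc, ← hmul ζ₁ hζ₁ ζ₂ hζ₂, ← add_mul, ← Complex.ofReal_add, sub_add_cancel,
          Complex.ofReal_one, one_mul]
    _ ≤ ‖T ζ₁‖ * ‖T ζ₂ * u‖ := norm_mul_le _ _
    _ ≤ Real.exp (K * ‖ζ₁‖) * C :=
        mul_le_mul (hgrowth ζ₁ hζ₁ (by rw [hζ₁norm]; linarith)) hC₂ (norm_nonneg _)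
          (Real.exp_nonneg _)
    _ ≤ Real.exp (K * ‖ζ‖) * C := by
        gcongr
        rw [hζ₁norm]
        linarith

lemma eventually_norm_exp_smul_mul_le [NormedSpace ℂ B] (hαβ : α ≤ β)
    (hβα : β - α < Real.pi)
    (hmul : ∀ ζ ∈ closedSector α β \ {0}, ∀ ζ' ∈ closedSector α β \ {0},
      T (ζ + ζ') = T ζ * T ζ')
    (hcont : ContinuousOn T (closedSector α β \ {0})) {u : B} {δ C : ℝ} (hδ : 0 < δ)
    (hC : ∀ ζ ∈ closedSector α β \ {0}, ‖ζ‖ < δ → ‖T ζ * u‖ ≤ C) :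
    ∀ᶠ t : ℝ in atTop, ∀ ζ ∈ closedSector α β \ {0},
      ‖Complex.exp (-(t : ℂ) * ζ * Complex.exp (-(((α + β) / 2 : ℝ) : ℂ) * Complex.I)) •
        (T ζ * u)‖ ≤ C := by
  obtain ⟨K, -, hK⟩ := exists_norm_mul_le_exp_mul hmul hcont hδ hC
  set c := Real.cos ((β - α) / 2)
  have hc : 0 < c := Real.cos_pos_of_mem_Ioo ⟨by linarith [Real.pi_pos], by linarith⟩
  filter_upwards [eventually_ge_atTop (K / c), eventually_ge_atTop 0] with t hKt ht ζ hζ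
  have hC0 : 0 ≤ C :=
    nonneg_of_mul_nonneg_right ((norm_nonneg _).trans (hK ζ hζ)) (Real.exp_pos _)
  have hKct : K ≤ t * c := (div_le_iff₀ hc).1 hKt
  rw [norm_smul]
  calc _ ≤ Real.exp (-(t * (c * ‖ζ‖))) * (Real.exp (K * ‖ζ‖) * C) :=
        mul_le_mul (norm_exp_neg_mul_le_s3 (by linarith) hζ.1 ht) (hK ζ hζ) (norm_nonneg _)
          (Real.exp_nonneg _)
    _ = Real.exp ((K - t * c) * ‖ζ‖) * C := by rw [← mul_assoc, ← Real.exp_add]; ring_nf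
    _ ≤ 1 * C := by
        gcongr
        exact Real.exp_le_one_iff.2 (mul_nonpos_of_nonpos_of_nonneg (by linarith) (norm_nonneg _))
    _ = C := one_mul C

lemma limsup_iSup_nnnorm_exp_smul_mul_le [NormedSpace ℂ B]
    (hαβ : α ≤ β) (hβα : β - α < Real.pi)
    (hmul : ∀ ζ ∈ closedSector α β \ {0}, ∀ ζ' ∈ closedSector α β \ {0},
      T (ζ + ζ') = T ζ * T ζ')
    (hcont : ContinuousOn T (closedSector α β \ {0})) (u : B) :
    limsup (fun t : ℝ => ⨆ ζ ∈ closedSector α β \ {0},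
        (‖Complex.exp (-(t : ℂ) * ζ * Complex.exp (-(((α + β) / 2 : ℝ) : ℂ) * Complex.I)) •
          (T ζ * u)‖₊ : ℝ≥0∞)) atTop
      ≤ limsup (fun ζ : ℂ => (‖T ζ * u‖₊ : ℝ≥0∞)) (𝓝[closedSector α β \ {0}] 0) := by
  refine ENNReal.le_of_forall_pos_le_add fun ε hε hL => ?_
  set L := limsup (fun ζ : ℂ => (‖T ζ * u‖₊ : ℝ≥0∞)) (𝓝[closedSector α β \ {0}] 0)
  have hLε : L + ε = ((L.toNNReal + ε : ℝ≥0) : ℝ≥0∞) := by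
    rw [ENNReal.coe_add, ENNReal.coe_toNNReal hL.ne]
  have hnear : ∀ᶠ ζ in 𝓝[closedSector α β \ {0}] 0, (‖T ζ * u‖₊ : ℝ≥0∞) < L + ε :=
    eventually_lt_of_limsup_lt (ENNReal.lt_add_right hL.ne (by exact_mod_cast hε.ne'))
  obtain ⟨δ, hδ, hδnear⟩ := Metric.mem_nhdsWithin_iff.1 hnear
  have hC : ∀ ζ ∈ closedSector α β \ {0}, ‖ζ‖ < δ → ‖T ζ * u‖ ≤ (L.toNNReal + ε : ℝ≥0) :=
    fun ζ hζ hζδ => by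
      have h : (‖T ζ * u‖₊ : ℝ≥0∞) < L + ε := hδnear ⟨mem_ball_zero_iff.2 hζδ, hζ⟩
      rw [hLε, ENNReal.coe_lt_coe] at h
      exact_mod_cast h.le
  refine limsup_le_of_le (by isBoundedDefault) ?_
  filter_upwards [eventually_norm_exp_smul_mul_le hαβ hβα hmul hcont hδ hC] with t ht
  refine iSup₂_le fun ζ hζ => ?_
  rw [hLε, ENNReal.coe_le_coe, ← NNReal.coe_le_coe, coe_nnnorm]
  exact ht ζ hζ

end Semigroup

theorem statement3_general
    {B : Type*} [NonUnitalNormedRing B] [NormedSpace ℂ B]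
    (a b : ℝ) (hba : b ≤ a + Real.pi)
    (T : ℂ → B)
    (hT : DifferentiableOn ℂ T (openSector a b))
    (hsg : ∀ ζ ∈ openSector a b, ∀ ζ' ∈ openSector a b, T (ζ + ζ') = T ζ * T ζ')
    (α β : ℝ) (hαa : a < α) (hαβ : α ≤ β) (hβb : β < b)
    (u : B) :
    Filter.limsup
      (fun lam : ℝ =>
        ⨆ ζ ∈ closedSector α β \ {0},
          (‖Complex.exp (-(lam : ℂ) * ζ * Complex.exp (-(((α + β) / 2 : ℝ) : ℂ) * Complex.I)) •
              (T ζ * u)‖₊ : ℝ≥0∞))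
      Filter.atTop
    = Filter.limsup (fun ζ : ℂ => (‖T ζ * u‖₊ : ℝ≥0∞))
        (𝓝[closedSector α β \ {0}] (0 : ℂ)) := by
  have hsub := closedSector_diff_zero_subset_openSector hαa hβb
  have hmul : ∀ ζ ∈ closedSector α β \ {0}, ∀ ζ' ∈ closedSector α β \ {0},
      T (ζ + ζ') = T ζ * T ζ' := fun ζ hζ ζ' hζ' => hsg ζ (hsub hζ) ζ' (hsub hζ')
  refine le_antisymm (limsup_iSup_nnnorm_exp_smul_mul_le hαβ (by linarith) hmul
    (hT.continuousOn.mono hsub) u) ?_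
  exact le_limsup_of_frequently_le
    (Frequently.of_forall fun t => limsup_nnnorm_le_iSup_nnnorm_exp_smul _ _ _ t)
    (by isBoundedDefault)

/-- Lemma 4.1(ii). -/
theorem statement3
    {B : Type*} [NonUnitalNormedRing B] [NormedSpace ℂ B]
    [IsScalarTower ℂ B B] [SMulCommClass ℂ B B] [CompleteSpace B]
    (a b : ℝ) (hab : a < b) (hba : b ≤ a + Real.pi)
    (T : ℂ → B)
    (hT : DifferentiableOn ℂ T (openSector a b))
    (hsg : ∀ ζ ∈ openSector a b, ∀ ζ' ∈ openSector a b, T (ζ + ζ') = T ζ * T ζ')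
    (α β : ℝ) (hαa : a < α) (hαβ : α ≤ β) (hβb : β < b)
    (u : B)
    (hu : ∃ C : ℝ, ∀ᶠ ζ in 𝓝[closedSector α β \ {0}] (0 : ℂ), ‖T ζ * u‖ ≤ C)
    (hgrowth : Filter.limsup
      (fun r : ℝ =>
        ((Real.log (max ‖T ((r : ℂ) * Complex.exp ((α : ℂ) * Complex.I))‖
            ‖T ((r : ℂ) * Complex.exp ((β : ℂ) * Complex.I))‖) / r : ℝ) : EReal))
      Filter.atTop < ⊤) :
    Filter.limsup
      (fun lam : ℝ =>
        ⨆ ζ ∈ closedSector α β \ {0},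
          (‖Complex.exp (-(lam : ℂ) * ζ * Complex.exp (-(((α + β) / 2 : ℝ) : ℂ) * Complex.I)) •
              (T ζ * u)‖₊ : ℝ≥0∞))
      Filter.atTop
    = Filter.limsup (fun ζ : ℂ => (‖T ζ * u‖₊ : ℝ≥0∞))
        (𝓝[closedSector α β \ {0}] (0 : ℂ)) :=
  statement3_general a b hba T hT hsg α β hαa hαβ hβb u
end
end

section
/- Let B be a nonzero commutative complex Banach algebra and let T : (0,∞) → B be norm-continuous with T(s+t) = T(s)T(t) for all s, t > 0, and suppose the closed linear span of { T(t) : t > 0 } equals B. Then for every character χ on B (i.e. every nonzero continuous multiplicative linear functional χ : B → ℂ): (a) χ(T(t)) ≠ 0 for all t > 0 and there is a unique λ_χ ∈ ℂ with χ(T(t)) = e^{λ_χ t} for all t > 0; (b) e^{t·Re(λ_χ)} ≤ ‖T(t)‖ for all t > 0; (c) for every complex measure ν on (0,∞) with ∫₀^∞ ‖T(t)‖ d|ν|(t) < +∞ one has χ( ∫₀^∞ T(t) dν(t) ) = ∫₀^∞ e^{λ_χ t} dν(t), where the integral of T is a Bochner integral in B. (Proposition 5.7) -/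
/-! The function `f t = χ (T t)` is continuous on `(0,∞)` with `f (s + t) = f s * f t`.
It vanishes nowhere: a zero would propagate to all of `(0,∞)`, and then `χ` would kill the
dense span of the `T t`. Integrating `f (x + s) = f x * f s` over `s ∈ [1, b]`, where
`∫₁ᵇ f ≠ 0`, expresses `f` through an antiderivative of itself, so `f` is differentiable with
`f' = λ f`, whence `f t = exp (λ t)`. For (b), characters have norm at most one, because
`‖χ a‖ ^ 2 ^ k ≤ ‖χ‖ * ‖a‖ ^ 2 ^ k` along the iterated squares of `a`; (c) is `χ` commuting
with the Bochner integral. -/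

open Filter Topology Set MeasureTheory

section MapAddEqMul

variable {M : Type*} {f : ℝ → M}

lemma map_succ_mul_eq_pow [Monoid M] (hf : ∀ s t : ℝ, 0 < s → 0 < t → f (s + t) = f s * f t)
    {u : ℝ} (hu : 0 < u) (n : ℕ) : f ((n + 1) * u) = f u ^ (n + 1) := by
  induction n with
  | zero => simp
  | succ k ih =>
    rw [show ((k + 1 : ℕ) + 1 : ℝ) * u = (k + 1) * u + u by push_cast; ring,
      hf _ _ (by positivity) hu, ih, ← pow_succ]

lemma ne_zero_of_map_add_eq_mul [MonoidWithZero M] [NoZeroDivisors M]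
    (hf : ∀ s t : ℝ, 0 < s → 0 < t → f (s + t) = f s * f t)
    {t₀ : ℝ} (ht₀ : 0 < t₀) (h : f t₀ ≠ 0) {t : ℝ} (ht : 0 < t) : f t ≠ 0 := by
  obtain ⟨n, hn⟩ := exists_nat_gt (t / t₀)
  have htn : t < (n + 1) * t₀ := by
    rw [div_lt_iff₀ ht₀] at hn
    linarith
  have hsplit : f ((n + 1) * t₀) = f t * f ((n + 1) * t₀ - t) := by
    rw [← hf _ _ ht (by linarith), add_sub_cancel]
  intro h0
  rw [map_succ_mul_eq_pow hf ht₀, h0, zero_mul] at hsplit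
  exact pow_ne_zero _ h hsplit

end MapAddEqMul

section Integral

variable {E : Type*} [NormedAddCommGroup E] {f : ℝ → E}

lemma intervalIntegrable_of_continuousOn_Ioi (hf : ContinuousOn f (Ioi 0)) {a b : ℝ}
    (ha : 0 < a) (hb : 0 < b) : IntervalIntegrable f volume a b :=
  (hf.mono fun _ hx => lt_of_lt_of_le (lt_min ha hb) hx.1).intervalIntegrable

variable [NormedSpace ℝ E] [CompleteSpace E]

lemma hasDerivAt_integral_of_continuousOn_Ioi (hf : ContinuousOn f (Ioi 0)) {a y : ℝ}
    (ha : 0 < a) (hy : 0 < y) : HasDerivAt (fun x => ∫ t in a..x, f t) (f y) y :=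
  intervalIntegral.integral_hasDerivAt_right (intervalIntegrable_of_continuousOn_Ioi hf ha hy)
    (hf.stronglyMeasurableAtFilter isOpen_Ioi y hy) (hf.continuousAt (Ioi_mem_nhds hy))

lemma exists_intervalIntegral_ne_zero (hf : ContinuousOn f (Ioi 0)) (h1 : f 1 ≠ 0) :
    ∃ b, 0 < b ∧ ∫ t in (1 : ℝ)..b, f t ≠ 0 := by
  by_contra! h
  have hconst : (fun x => ∫ t in (1 : ℝ)..x, f t) =ᶠ[𝓝 1] fun _ => 0 := by
    filter_upwards [Ioi_mem_nhds one_pos] with x hx using h x hx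
  exact h1 ((hasDerivAt_integral_of_continuousOn_Ioi hf one_pos one_pos).unique
    ((hasDerivAt_const 1 0).congr_of_eventuallyEq hconst))

end Integral

section ExpRepresentation

variable {f : ℝ → ℂ}

lemma mul_intervalIntegral_eq_of_map_add_eq_mul
    (hf : ∀ s t : ℝ, 0 < s → 0 < t → f (s + t) = f s * f t)
    {a b x : ℝ} (ha : 0 < a) (hb : 0 < b) (hx : 0 < x) :
    f x * ∫ t in a..b, f t = ∫ t in a + x..b + x, f t := by
  rw [← intervalIntegral.integral_comp_add_right, ← intervalIntegral.integral_const_mul]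
  refine intervalIntegral.integral_congr fun s hs => ?_
  have hs0 : 0 < s := lt_of_lt_of_le (lt_min ha hb) hs.1
  simp only [add_comm s x, hf x s hx hs0]

lemma exists_hasDerivAt_eq_mul_of_map_add_eq_mul (hc : ContinuousOn f (Ioi 0))
    (hf : ∀ s t : ℝ, 0 < s → 0 < t → f (s + t) = f s * f t) (h1 : f 1 ≠ 0) :
    ∃ c : ℂ, ∀ x, 0 < x → HasDerivAt f (c * f x) x := by
  obtain ⟨b, hb, hI⟩ := exists_intervalIntegral_ne_zero hc h1
  set I := ∫ t in (1 : ℝ)..b, f t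
  set G := fun y => ∫ t in (1 : ℝ)..y, f t
  refine ⟨(f b - f 1) / I, fun x hx => ?_⟩
  have hfG : ∀ y, 0 < y → f y = (G (b + y) - G (1 + y)) / I := fun y hy => by
    rw [eq_div_iff hI, mul_intervalIntegral_eq_of_map_add_eq_mul hf one_pos hb hy,
      intervalIntegral.integral_interval_sub_left
        (intervalIntegrable_of_continuousOn_Ioi hc one_pos (by positivity))
        (intervalIntegrable_of_continuousOn_Ioi hc one_pos (by positivity))]
  have hG : HasDerivAt (fun y => (G (b + y) - G (1 + y)) / I)
      ((f (b + x) - f (1 + x)) / I) x :=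
    (((hasDerivAt_integral_of_continuousOn_Ioi hc one_pos (by positivity)).comp_const_add b x).sub
      ((hasDerivAt_integral_of_continuousOn_Ioi hc one_pos (by positivity)).comp_const_add 1 x)
      ).div_const I
  have hev : f =ᶠ[𝓝 x] fun y => (G (b + y) - G (1 + y)) / I := by
    filter_upwards [Ioi_mem_nhds hx] with y hy using hfG y hy
  refine (hG.congr_of_eventuallyEq hev).congr_deriv ?_
  rw [add_comm b, add_comm 1, hf x b hx hb, hf x 1 hx one_pos]
  ring

lemma exists_eq_mul_exp_of_hasDerivAt {c : ℂ} (hf : ∀ x, 0 < x → HasDerivAt f (c * f x) x) :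
    ∃ K, ∀ x, 0 < x → f x = K * Complex.exp (c * x) := by
  have hexp : ∀ x : ℝ, HasDerivAt (fun y : ℝ => Complex.exp (-(c * y)))
      (-c * Complex.exp (-(c * x))) x := fun x => by
    simpa [mul_comm] using ((hasDerivAt_id x).ofReal_comp.const_mul c).neg.cexp
  have hderiv : ∀ x, 0 < x → HasDerivAt (fun y : ℝ => Complex.exp (-(c * y)) * f y) 0 x :=
    fun x hx => ((hexp x).mul (hf x hx)).congr_deriv (by ring)
  obtain ⟨K, hK⟩ := isOpen_Ioi.exists_is_const_of_deriv_eq_zero isPreconnected_Ioi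
    (fun x hx => (hderiv x hx).differentiableAt.differentiableWithinAt)
    (fun x hx => (hderiv x hx).deriv)
  refine ⟨K, fun x hx => ?_⟩
  rw [← hK x hx, mul_right_comm, ← Complex.exp_add, neg_add_cancel, Complex.exp_zero, one_mul]

lemma exists_eq_exp_mul_of_map_add_eq_mul (hc : ContinuousOn f (Ioi 0))
    (hf : ∀ s t : ℝ, 0 < s → 0 < t → f (s + t) = f s * f t) (h1 : f 1 ≠ 0) :
    ∃ c : ℂ, ∀ t, 0 < t → f t = Complex.exp (c * t) := by
  obtain ⟨c, hc'⟩ := exists_hasDerivAt_eq_mul_of_map_add_eq_mul hc hf h1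
  obtain ⟨K, hK⟩ := exists_eq_mul_exp_of_hasDerivAt hc'
  have hK0 : K ≠ 0 := by
    rintro rfl
    exact h1 (by simpa using hK 1 one_pos)
  -- `K e^{2c} = f 2 = f 1 ^ 2 = K ^ 2 e^{2c}`
  have hKK : K * K = K := by
    have h2 := hf 1 1 one_pos one_pos
    have he : Complex.exp (c * ↑(1 + 1 : ℝ)) = Complex.exp c * Complex.exp c := by
      push_cast
      rw [← Complex.exp_add]
      ring_nf
    rw [hK _ (by norm_num), hK 1 one_pos, he, Complex.ofReal_one, mul_one] at h2
    refine mul_right_cancel₀ (mul_ne_zero (Complex.exp_ne_zero c) (Complex.exp_ne_zero c)) ?_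
    linear_combination -h2
  have hK1 : K = 1 := by simpa [hK0] using hKK
  exact ⟨c, fun t ht => by rw [hK t ht, hK1, one_mul]⟩

end ExpRepresentation

lemma Complex.eq_of_forall_exp_mul_ofReal_eq {a b : ℂ}
    (h : ∀ t : ℝ, 0 < t → Complex.exp (a * t) = Complex.exp (b * t)) : a = b := by
  have hderiv : ∀ c : ℂ, HasDerivAt (fun t : ℝ => Complex.exp (c * t))
      (Complex.exp c * c) 1 := fun c => by
    simpa using ((hasDerivAt_id (1 : ℝ)).ofReal_comp.const_mul c).cexp
  have hev : (fun t : ℝ => Complex.exp (a * t)) =ᶠ[𝓝 1] fun t => Complex.exp (b * t) := by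
    filter_upwards [Ioi_mem_nhds one_pos] with t ht using h t ht
  have hab := (hderiv a).unique ((hderiv b).congr_of_eventuallyEq hev)
  have h1 : Complex.exp a = Complex.exp b := by simpa using h 1 one_pos
  rwa [h1, mul_right_inj' (Complex.exp_ne_zero b)] at hab

lemma le_of_frequently_pow_le_mul_pow {x y C : ℝ} (hy : 0 ≤ y)
    (h : ∃ᶠ n in atTop, x ^ n ≤ C * y ^ n) : x ≤ y := by
  by_contra! hlt
  rcases hy.eq_or_lt with rfl | hy0
  · obtain ⟨n, hn, hn1⟩ := (h.and_eventually (eventually_ge_atTop 1)).exists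
    rw [zero_pow (by omega), mul_zero] at hn
    linarith [pow_pos hlt n]
  have hr : 1 < x / y := (one_lt_div hy0).mpr hlt
  have hbig := (tendsto_pow_atTop_atTop_of_one_lt hr).eventually_gt_atTop C
  obtain ⟨n, hn, hn'⟩ := (h.and_eventually hbig).exists
  rw [div_pow, lt_div_iff₀ (by positivity)] at hn'
  linarith

lemma norm_apply_le_of_map_mul {𝕜 B : Type*} [NontriviallyNormedField 𝕜]
    [NonUnitalNormedRing B] [NormedSpace 𝕜 B] (χ : B →L[𝕜] 𝕜)
    (hχ : ∀ u v, χ (u * v) = χ u * χ v) (a : B) : ‖χ a‖ ≤ ‖a‖ := by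
  have hsq : ∀ k : ℕ, χ ((fun u => u * u)^[k] a) = χ a ^ 2 ^ k ∧
      ‖(fun u => u * u)^[k] a‖ ≤ ‖a‖ ^ 2 ^ k := by
    intro k
    induction k with
    | zero => simp
    | succ k ih =>
      rw [Function.iterate_succ_apply', hχ, ih.1, pow_succ, pow_mul, sq]
      refine ⟨rfl, (norm_mul_le _ _).trans ?_⟩
      rw [pow_mul, sq]
      exact mul_self_le_mul_self (norm_nonneg _) ih.2
  refine le_of_frequently_pow_le_mul_pow (norm_nonneg _) (C := ‖χ‖)
    ((tendsto_pow_atTop_atTop_of_one_lt (α := ℕ) one_lt_two).frequently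
      (Frequently.of_forall fun k => ?_))
  calc ‖χ a‖ ^ 2 ^ k = ‖χ ((fun u => u * u)^[k] a)‖ := by rw [(hsq k).1, norm_pow]
    _ ≤ ‖χ‖ * ‖(fun u => u * u)^[k] a‖ := χ.le_opNorm _
    _ ≤ ‖χ‖ * ‖a‖ ^ 2 ^ k := by gcongr; exact (hsq k).2

/-- A complex measure `ν` on `(0,∞)` is encoded as a (positive) measure `μ` together with a
density `g : ℝ → ℂ` integrable on `(0,∞)`; the total variation integral `∫ h d|ν|` is then
`∫ h(t) ‖g t‖ dμ(t)`. -/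
theorem statement5_general
    {B : Type*} [NonUnitalNormedCommRing B] [NormedSpace ℂ B] [CompleteSpace B]
    (T : ℝ → B)
    (hcont : ContinuousOn T (Set.Ioi 0))
    (hsg : ∀ s t : ℝ, 0 < s → 0 < t → T (s + t) = T s * T t)
    (hspan : (Submodule.span ℂ (T '' Set.Ioi 0)).topologicalClosure = ⊤)
    (χ : B →L[ℂ] ℂ) (hχmul : ∀ u v : B, χ (u * v) = χ u * χ v) (hχ : χ ≠ 0) :
    ∃ lam : ℂ,
      -- (a) existence and uniqueness of `λ_χ`, and nonvanishing of `χ(T(t))`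
      (∀ t : ℝ, 0 < t → χ (T t) = Complex.exp (lam * t)) ∧
      (∀ lam' : ℂ, (∀ t : ℝ, 0 < t → χ (T t) = Complex.exp (lam' * t)) → lam' = lam) ∧
      (∀ t : ℝ, 0 < t → χ (T t) ≠ 0) ∧
      -- (b)
      (∀ t : ℝ, 0 < t → Real.exp (t * lam.re) ≤ ‖T t‖) ∧
      -- (c)
      (∀ (μ : MeasureTheory.Measure ℝ) (g : ℝ → ℂ),
        MeasureTheory.Integrable g (μ.restrict (Set.Ioi 0)) →
        MeasureTheory.Integrable (fun t : ℝ => ‖g t‖ * ‖T t‖) (μ.restrict (Set.Ioi 0)) →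
        χ (∫ t in Set.Ioi (0 : ℝ), g t • T t ∂μ)
          = ∫ t in Set.Ioi (0 : ℝ), g t * Complex.exp (lam * t) ∂μ) := by
  have hfc : ContinuousOn (fun t => χ (T t)) (Ioi 0) := χ.continuous.comp_continuousOn hcont
  have hfm : ∀ s t : ℝ, 0 < s → 0 < t → χ (T (s + t)) = χ (T s) * χ (T t) :=
    fun s t hs ht => by rw [hsg s t hs ht, hχmul]
  obtain ⟨t₀, ht₀, hχt₀⟩ : ∃ t₀, 0 < t₀ ∧ χ (T t₀) ≠ 0 := by
    by_contra! h
    refine hχ (ContinuousLinearMap.ext_on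
      (Submodule.dense_iff_topologicalClosure_eq_top.mpr hspan) ?_)
    rintro _ ⟨t, ht, rfl⟩
    simpa using h t ht
  have hne : ∀ t : ℝ, 0 < t → χ (T t) ≠ 0 := fun t ht =>
    ne_zero_of_map_add_eq_mul (f := fun t => χ (T t)) hfm ht₀ hχt₀ ht
  obtain ⟨lam, hlam⟩ := exists_eq_exp_mul_of_map_add_eq_mul hfc hfm (hne 1 one_pos)
  refine ⟨lam, hlam, fun lam' hlam' => Complex.eq_of_forall_exp_mul_ofReal_eq fun t ht =>
    (hlam' t ht).symm.trans (hlam t ht), hne, fun t ht => ?_, fun μ g hg hgT => ?_⟩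
  · calc Real.exp (t * lam.re) = ‖χ (T t)‖ := by
          rw [hlam t ht, Complex.norm_exp]; simp [mul_comm]
      _ ≤ ‖T t‖ := norm_apply_le_of_map_mul χ hχmul (T t)
  · have hint : Integrable (fun t => g t • T t) (μ.restrict (Ioi 0)) :=
      hgT.mono' (hg.aestronglyMeasurable.smul (hcont.aestronglyMeasurable measurableSet_Ioi))
        (Eventually.of_forall fun t => (norm_smul _ _).le)
    rw [← χ.integral_comp_comm hint]
    refine setIntegral_congr_fun measurableSet_Ioi fun t ht => ?_
    rw [map_smul, smul_eq_mul, hlam t ht]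

/-- Proposition 5.7.  A complex measure `ν` on `(0,∞)` is encoded as a
(positive) measure `μ` together with a density `g : ℝ → ℂ` integrable on `(0,∞)`; the total
variation integral `∫ h d|ν|` is then `∫ h(t) ‖g t‖ dμ(t)`. -/
theorem statement5
    {B : Type*} [NonUnitalNormedCommRing B] [NormedSpace ℂ B]
    [IsScalarTower ℂ B B] [SMulCommClass ℂ B B] [CompleteSpace B] [Nontrivial B]
    (T : ℝ → B)
    (hcont : ContinuousOn T (Set.Ioi 0))
    (hsg : ∀ s t : ℝ, 0 < s → 0 < t → T (s + t) = T s * T t)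
    (hspan : (Submodule.span ℂ (T '' Set.Ioi 0)).topologicalClosure = ⊤)
    (χ : B →L[ℂ] ℂ) (hχmul : ∀ u v : B, χ (u * v) = χ u * χ v) (hχ : χ ≠ 0) :
    ∃ lam : ℂ,
      -- (a) existence and uniqueness of `λ_χ`, and nonvanishing of `χ(T(t))`
      (∀ t : ℝ, 0 < t → χ (T t) = Complex.exp (lam * t)) ∧
      (∀ lam' : ℂ, (∀ t : ℝ, 0 < t → χ (T t) = Complex.exp (lam' * t)) → lam' = lam) ∧
      (∀ t : ℝ, 0 < t → χ (T t) ≠ 0) ∧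
      -- (b)
      (∀ t : ℝ, 0 < t → Real.exp (t * lam.re) ≤ ‖T t‖) ∧
      -- (c)
      (∀ (μ : MeasureTheory.Measure ℝ) (g : ℝ → ℂ),
        MeasureTheory.Integrable g (μ.restrict (Set.Ioi 0)) →
        MeasureTheory.Integrable (fun t : ℝ => ‖g t‖ * ‖T t‖) (μ.restrict (Set.Ioi 0)) →
        χ (∫ t in Set.Ioi (0 : ℝ), g t • T t ∂μ)
          = ∫ t in Set.Ioi (0 : ℝ), g t * Complex.exp (lam * t) ∂μ) :=
  statement5_general T hcont hsg hspan χ hχmul hχ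
end

section
/- Let α, β ∈ ℝᵏ with αⱼ ≤ βⱼ < αⱼ + π for all j, let X be a complex Banach space, and let T : S̄_{α,β} → B(X) satisfy T(0) = Id, T(ζ)∘T(ζ') = T(ζ+ζ') for all ζ, ζ' ∈ S̄_{α,β}, and ζ ↦ T(ζ)x continuous on S̄_{α,β} for each x ∈ X. Let z ∈ ℂᵏ be such that sup_{ζ ∈ S̄_{α,β}} |e^{z·ζ}| ‖T(ζ)‖ < +∞. Let ν₁, ν₂ be complex measures of bounded variation on S̄_{α,β} and let ν₁∗ν₂ denote their convolution (the pushforward of ν₁ ⊗ ν₂ under addition (ζ, ζ') ↦ ζ + ζ'). Then for every x ∈ X, ∫_{S̄_{α,β}} e^{z·ζ} T(ζ)x d(ν₁∗ν₂)(ζ) = ∫_{S̄_{α,β}} e^{z·ζ} T(ζ) [ ∫_{S̄_{α,β}} e^{z·ζ'} T(ζ')x dν₂(ζ') ] dν₁(ζ), all integrals being Bochner integrals in X. (Multiplicativity under convolution, from Theorem 8.6(vii)) -/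
/-!
Put `E ζ = exp (z · ζ)`. Since `E` is multiplicative, `W ζ = E ζ • T ζ` is again a semigroup on
`S̄_{α,β}`, and by hypothesis it is uniformly bounded, so every orbit `ζ ↦ W ζ x` is bounded and
continuous on the sector. The identity is then Fubini for `ν₁ ⊗ ν₂` followed by
`W ζ (W ζ' x) = W (ζ + ζ') x`, which needs `ζ + ζ' ∈ S̄_{α,β}`: a sector of opening less than `π` is
an intersection of half-planes, i.e. is cut out by linear inequalities, hence closed under addition.
-/

open Filter Topology Set MeasureTheory

noncomputable section

open Complex

lemma im_ofReal_mul_exp_mul_exp (r θ c : ℝ) :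
    ((r : ℂ) * exp (θ * I) * exp (-c * I)).im = r * Real.sin (θ - c) := by
  rw [mul_assoc, ← exp_add, ← add_mul, ← ofReal_neg, ← ofReal_add, ← sub_eq_add_neg,
    im_ofReal_mul, exp_ofReal_mul_I_im]

lemma re_ofReal_mul_exp_mul_exp (r θ c : ℝ) :
    ((r : ℂ) * exp (θ * I) * exp (-c * I)).re = r * Real.cos (θ - c) := by
  rw [mul_assoc, ← exp_add, ← add_mul, ← ofReal_neg, ← ofReal_add, ← sub_eq_add_neg,
    re_ofReal_mul, exp_ofReal_mul_I_re]

/-- The third condition only matters for `a = b`, where it separates the ray from the opposite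
ray. -/
lemma mem_closedSector_iff {a b : ℝ} (hab : a ≤ b) (hπ : b < a + Real.pi) (w : ℂ) :
    w ∈ closedSector a b ↔
      0 ≤ (w * exp (-a * I)).im ∧ (w * exp (-b * I)).im ≤ 0 ∧
        0 ≤ (w * exp (-((a + b) / 2 : ℝ) * I)).re := by
  have hpi := Real.pi_pos
  constructor
  · rintro ⟨r, hr, θ, ⟨hθa, hθb⟩, rfl⟩
    rw [im_ofReal_mul_exp_mul_exp, im_ofReal_mul_exp_mul_exp, re_ofReal_mul_exp_mul_exp]
    refine ⟨mul_nonneg hr (Real.sin_nonneg_of_nonneg_of_le_pi (by linarith) (by linarith)),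
      mul_nonpos_of_nonneg_of_nonpos hr
        (Real.sin_nonpos_of_nonpos_of_neg_pi_le (by linarith) (by linarith)),
      mul_nonneg hr (Real.cos_nonneg_of_mem_Icc ⟨by linarith, by linarith⟩)⟩
  · rintro ⟨ha, hb, hm⟩
    rcases eq_or_ne w 0 with rfl | hw
    · exact ⟨0, le_rfl, a, ⟨le_rfl, hab⟩, by simp⟩
    set m := (a + b) / 2 with hm_def
    set ψ := arg (w * exp (-m * I))
    have hψ : |ψ| ≤ Real.pi / 2 := abs_arg_le_pi_div_two_iff.2 hm
    have hpolar : w = (‖w‖ : ℂ) * exp ((ψ + m : ℝ) * I) := by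
      have h := norm_mul_exp_arg_mul_I (w * exp (-m * I))
      have hrot : ‖exp (-m * I)‖ = 1 := by rw [← ofReal_neg]; exact norm_exp_ofReal_mul_I _
      rw [norm_mul, hrot, mul_one] at h
      rw [ofReal_add, add_mul, exp_add, ← mul_assoc, h, mul_assoc, ← exp_add]
      simp
    have hr : 0 < ‖w‖ := norm_pos_iff.2 hw
    rw [hpolar, im_ofReal_mul_exp_mul_exp] at ha hb
    have hsa := nonneg_of_mul_nonneg_right ha hr
    have hsb := nonpos_of_mul_nonpos_right hb hr
    rw [abs_le] at hψ
    refine ⟨‖w‖, hr.le, ψ + m, ⟨?_, ?_⟩, hpolar⟩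
    · by_contra! h
      exact (Real.sin_neg_of_neg_of_neg_pi_lt (by linarith) (by linarith)).not_ge hsa
    · by_contra! h
      exact (Real.sin_pos_of_pos_of_lt_pi (by linarith) (by linarith)).not_ge hsb

lemma add_mem_closedSector {a b : ℝ} (hπ : b < a + Real.pi) {w₁ w₂ : ℂ}
    (h₁ : w₁ ∈ closedSector a b) (h₂ : w₂ ∈ closedSector a b) :
    w₁ + w₂ ∈ closedSector a b := by
  have hab : a ≤ b := by
    obtain ⟨-, -, θ, hθ, -⟩ := h₁
    exact hθ.1.trans hθ.2
  rw [mem_closedSector_iff hab hπ] at h₁ h₂ ⊢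
  simp only [add_mul, add_im, add_re]
  exact ⟨add_nonneg h₁.1 h₂.1, add_nonpos h₁.2.1 h₂.2.1, add_nonneg h₁.2.2 h₂.2.2⟩

theorem ContinuousOn.aestronglyMeasurable_of_ae_mem {α β : Type*} [TopologicalSpace α]
    [MeasurableSpace α] [OpensMeasurableSpace α] [TopologicalSpace β]
    [TopologicalSpace.PseudoMetrizableSpace β] [SecondCountableTopologyEither α β]
    {f : α → β} {s : Set α} {μ : Measure α}
    (hf : ContinuousOn f s) (hs : ∀ᵐ x ∂μ, x ∈ s) : AEStronglyMeasurable f μ := by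
  have hs_null : NullMeasurableSet s μ :=
    MeasurableSet.univ.nullMeasurableSet.congr (ae_eq_univ.2 hs).symm
  obtain ⟨t, hts, ht, hts_ae⟩ := hs_null.exists_measurable_subset_ae_eq
  rw [← Measure.restrict_eq_self_of_ae_mem hs]
  exact Measure.restrict_congr_set hts_ae ▸ (hf.mono hts).aestronglyMeasurable ht

section

variable {M X : Type*} [Add M] [TopologicalSpace M] [ContinuousAdd M] [SecondCountableTopology M]
  [MeasurableSpace M] [OpensMeasurableSpace M]
  [NormedAddCommGroup X] [NormedSpace ℂ X] [CompleteSpace X]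
  {S : Set M} {μ₁ μ₂ : Measure M} [SFinite μ₁] [SFinite μ₂] {g₁ g₂ : M → ℂ}

theorem integral_prod_smul_orbit_add (hS : ∀ ζ ∈ S, ∀ ζ' ∈ S, ζ + ζ' ∈ S)
    (W : M → X →L[ℂ] X) (u : M → X) (hWu : ∀ ζ ∈ S, ∀ ζ' ∈ S, W ζ (u ζ') = u (ζ + ζ'))
    (hu : ContinuousOn u S) {C : ℝ} (huC : ∀ ζ ∈ S, ‖u ζ‖ ≤ C)
    (hμ₁ : ∀ᵐ ζ ∂μ₁, ζ ∈ S) (hμ₂ : ∀ᵐ ζ ∂μ₂, ζ ∈ S)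
    (hg₁ : Integrable g₁ μ₁) (hg₂ : Integrable g₂ μ₂) :
    ∫ p, (g₁ p.1 * g₂ p.2) • u (p.1 + p.2) ∂(μ₁.prod μ₂)
      = ∫ ζ, g₁ ζ • W ζ (∫ ζ', g₂ ζ' • u ζ' ∂μ₂) ∂μ₁ := by
  have hint₂ : Integrable (fun ζ' => g₂ ζ' • u ζ') μ₂ :=
    hg₂.smul_bdd C (hu.aestronglyMeasurable_of_ae_mem hμ₂) (hμ₂.mono huC)
  have hprod : ∀ᵐ p ∂(μ₁.prod μ₂), p.1 + p.2 ∈ S := by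
    filter_upwards [Measure.quasiMeasurePreserving_fst.ae hμ₁,
      Measure.quasiMeasurePreserving_snd.ae hμ₂] with p h₁ h₂ using hS _ h₁ _ h₂
  have hint : Integrable (fun p : M × M => (g₁ p.1 * g₂ p.2) • u (p.1 + p.2)) (μ₁.prod μ₂) :=
    (hg₁.mul_prod hg₂).smul_bdd C
      ((hu.comp continuous_add.continuousOn (mapsTo_preimage _ _)).aestronglyMeasurable_of_ae_mem
        hprod) (hprod.mono fun p hp => huC _ hp)
  rw [integral_prod _ hint]
  refine integral_congr_ae ?_
  filter_upwards [hμ₁] with ζ hζ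
  calc ∫ ζ', (g₁ ζ * g₂ ζ') • u (ζ + ζ') ∂μ₂
      = ∫ ζ', g₁ ζ • W ζ (g₂ ζ' • u ζ') ∂μ₂ := by
        refine integral_congr_ae ?_
        filter_upwards [hμ₂] with ζ' hζ'
        rw [map_smul, hWu ζ hζ ζ' hζ', smul_smul]
    _ = g₁ ζ • W ζ (∫ ζ', g₂ ζ' • u ζ' ∂μ₂) := by
        rw [integral_smul, (W ζ).integral_comp_comm hint₂]

end

/-- A complex measure `νᵢ` of bounded variation on `S̄_{α,β}` is encoded as a finite measure `μᵢ`
concentrated on `S̄_{α,β}` with an integrable density `gᵢ`, so that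
`∫ h d(ν₁∗ν₂) = ∬ h(ζ+ζ') g₁(ζ) g₂(ζ') dμ₁ dμ₂`. -/
theorem statement10_general
    {X : Type*} [NormedAddCommGroup X] [NormedSpace ℂ X] [CompleteSpace X]
    {k : ℕ}
    (α β : Fin k → ℝ) (hπ : ∀ j, β j < α j + Real.pi)
    (S : Set (Fin k → ℂ)) (hS : S = {ζ | ∀ j, ζ j ∈ closedSector (α j) (β j)})
    (T : (Fin k → ℂ) → X →L[ℂ] X)
    (hsg : ∀ ζ ∈ S, ∀ ζ' ∈ S, (T ζ).comp (T ζ') = T (ζ + ζ'))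
    (hcont : ∀ x : X, ContinuousOn (fun ζ => T ζ x) S)
    (z : Fin k → ℂ)
    (hbound : ∃ C : ℝ, ∀ ζ ∈ S, ‖Complex.exp (∑ j, z j * ζ j)‖ * ‖T ζ‖ ≤ C)
    (μ₁ μ₂ : MeasureTheory.Measure (Fin k → ℂ))
    [MeasureTheory.IsFiniteMeasure μ₁] [MeasureTheory.IsFiniteMeasure μ₂]
    (g₁ g₂ : (Fin k → ℂ) → ℂ)
    (hg₁ : MeasureTheory.Integrable g₁ μ₁) (hg₂ : MeasureTheory.Integrable g₂ μ₂)
    (hs₁ : μ₁ Sᶜ = 0) (hs₂ : μ₂ Sᶜ = 0)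
    (x : X) :
    ∫ p : (Fin k → ℂ) × (Fin k → ℂ),
        (Complex.exp (∑ j, z j * (p.1 j + p.2 j)) * (g₁ p.1 * g₂ p.2)) • T (p.1 + p.2) x
        ∂(μ₁.prod μ₂)
      = ∫ ζ, (Complex.exp (∑ j, z j * ζ j) * g₁ ζ) •
          T ζ (∫ ζ', (Complex.exp (∑ j, z j * ζ' j) * g₂ ζ') • T ζ' x ∂μ₂) ∂μ₁ := by
  obtain ⟨C, hC⟩ := hbound
  set E : (Fin k → ℂ) → ℂ := fun ζ => exp (∑ j, z j * ζ j)
  have hE_add (ζ ζ' : Fin k → ℂ) : E (ζ + ζ') = E ζ * E ζ' := by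
    simp only [E, ← exp_add, ← Finset.sum_add_distrib, Pi.add_apply, mul_add]
  have hS_add : ∀ ζ ∈ S, ∀ ζ' ∈ S, ζ + ζ' ∈ S := by
    subst hS
    exact fun ζ hζ ζ' hζ' j => add_mem_closedSector (hπ j) (hζ j) (hζ' j)
  have key := integral_prod_smul_orbit_add hS_add (fun ζ => E ζ • T ζ) (fun ζ => E ζ • T ζ x)
    (fun ζ hζ ζ' hζ' => by
      rw [smul_apply, map_smul, smul_smul, ← hE_add,
        ← ContinuousLinearMap.comp_apply, hsg ζ hζ ζ' hζ'])
    ((by fun_prop : Continuous E).continuousOn.smul (hcont x))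
    (fun ζ hζ => calc
      ‖E ζ • T ζ x‖ ≤ ‖E ζ‖ * (‖T ζ‖ * ‖x‖) := (norm_smul_le _ _).trans
        (by gcongr; exact (T ζ).le_opNorm x)
      _ ≤ C * ‖x‖ := by rw [← mul_assoc]; gcongr; exact hC ζ hζ)
    (mem_ae_iff.2 hs₁) (mem_ae_iff.2 hs₂) hg₁ hg₂
  convert key using 3 <;> simp only [E, smul_apply, smul_smul, mul_comm, Pi.add_apply]

/-- multiplicativity under convolution, from Theorem 8.6(vii).
A complex measure `νᵢ` of bounded variation on `S̄_{α,β}` is encoded as a finite measure `μᵢ`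
concentrated on `S̄_{α,β}` with an integrable density `gᵢ : ℂᵏ → ℂ`; the convolution `ν₁∗ν₂`
(the pushforward of `ν₁ ⊗ ν₂` under addition) then integrates `h` to
`∬ h(ζ+ζ') g₁(ζ) g₂(ζ') dμ₁ dμ₂`. -/
theorem statement10
    {X : Type*} [NormedAddCommGroup X] [NormedSpace ℂ X] [CompleteSpace X]
    {k : ℕ}
    (α β : Fin k → ℝ) (hαβ : ∀ j, α j ≤ β j) (hπ : ∀ j, β j < α j + Real.pi)
    (S : Set (Fin k → ℂ)) (hS : S = {ζ | ∀ j, ζ j ∈ closedSector (α j) (β j)})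
    (T : (Fin k → ℂ) → X →L[ℂ] X)
    (hT0 : T 0 = ContinuousLinearMap.id ℂ X)
    (hsg : ∀ ζ ∈ S, ∀ ζ' ∈ S, (T ζ).comp (T ζ') = T (ζ + ζ'))
    (hcont : ∀ x : X, ContinuousOn (fun ζ => T ζ x) S)
    (z : Fin k → ℂ)
    (hbound : ∃ C : ℝ, ∀ ζ ∈ S, ‖Complex.exp (∑ j, z j * ζ j)‖ * ‖T ζ‖ ≤ C)
    (μ₁ μ₂ : MeasureTheory.Measure (Fin k → ℂ))
    [MeasureTheory.IsFiniteMeasure μ₁] [MeasureTheory.IsFiniteMeasure μ₂]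
    (g₁ g₂ : (Fin k → ℂ) → ℂ)
    (hg₁ : MeasureTheory.Integrable g₁ μ₁) (hg₂ : MeasureTheory.Integrable g₂ μ₂)
    (hs₁ : μ₁ Sᶜ = 0) (hs₂ : μ₂ Sᶜ = 0)
    (x : X) :
    ∫ p : (Fin k → ℂ) × (Fin k → ℂ),
        (Complex.exp (∑ j, z j * (p.1 j + p.2 j)) * (g₁ p.1 * g₂ p.2)) • T (p.1 + p.2) x
        ∂(μ₁.prod μ₂)
      = ∫ ζ, (Complex.exp (∑ j, z j * ζ j) * g₁ ζ) •
          T ζ (∫ ζ', (Complex.exp (∑ j, z j * ζ' j) * g₂ ζ') • T ζ' x ∂μ₂) ∂μ₁ :=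
  statement10_general α β hπ S hS T hsg hcont z hbound μ₁ μ₂ g₁ g₂ hg₁ hg₂ hs₁ hs₂ x
end
end

section
/- Let α, β ∈ ℝᵏ with αⱼ ≤ βⱼ < αⱼ + π for all j, and let ν be a complex measure of bounded variation on S̄_{α,β} ⊆ ℂᵏ. Let λ = (λ₁, …, λ_k) with λⱼ ∈ ℂ ∖ S̄_{αⱼ,βⱼ} for each j. Then: (a) for each j there exists ωⱼ ∈ [−π/2−αⱼ, π/2−βⱼ] with Re(λⱼ e^{iωⱼ}) < 0; (b) for any such choice ω = (ω₁, …, ω_k), (1/(2πi)ᵏ) ∫₀^{e^{iω}·∞} e^{λ·σ} FB(ν)(σ) dσ = C(ν)(λ), where ∫₀^{e^{iω}·∞} h(σ) dσ denotes the iterated ray integral ∫₀^∞ ⋯ ∫₀^∞ h(t₁e^{iω₁}, …, t_k e^{iω_k}) e^{i(ω₁+⋯+ω_k)} dt₁ ⋯ dt_k. (Proposition 10.4) -/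
/-!
(a) In a coordinate with sector `S̄_{a,b}`, write `λ = |λ| e^{iψ}` with `ψ ∈ [a, a + 2π)`;
then `b < ψ` since `λ` is outside the sector. As `ω` runs over `[-π/2 - a, π/2 - b]`, the angle `ψ + ω` sweeps an interval of length
`π - (b - a) ≥ 0` that meets `(π/2, 3π/2)` exactly because `b < ψ < a + 2π`; there
`Re(λ e^{iω}) = |λ| cos(ψ + ω) < 0`.

(b) The admissible rotations map the sector into the closed right half-plane, so
`Re(e^{iωⱼ}(λⱼ - ζⱼ)) ≤ Re(λⱼ e^{iωⱼ}) < 0` on the support of `ν`. This dominates the integrand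
by `exp(∑ tⱼ Re(λⱼ e^{iωⱼ})) |g|`, so Fubini applies, and the inner ray integrals are
`∫₀^∞ e^{ct} dt = -1/c`, which after the Jacobian `e^{iωⱼ}` is the Cauchy kernel `(ζⱼ - λⱼ)⁻¹`.
-/

open Filter Topology Set MeasureTheory

noncomputable section

/-- The open positive orthant of `ℝᵏ`, used to parametrize iterated ray integrals. -/
def posOrthant (k : ℕ) : Set (Fin k → ℝ) := {t | ∀ j, 0 < t j}

open Complex
open scoped Real

lemma exists_eq_norm_mul_exp_mem_Ico (z : ℂ) (a : ℝ) :
    ∃ ψ ∈ Ico a (a + 2 * π), z = ‖z‖ * exp (ψ * I) := by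
  refine ⟨toIcoMod Real.two_pi_pos a (arg z), toIcoMod_mem_Ico _ _ _, ?_⟩
  rw [toIcoMod, ofReal_sub, ofReal_zsmul, ofReal_mul, ofReal_ofNat, exp_mul_I_periodic.sub_zsmul_eq,
    norm_mul_exp_arg_mul_I]

lemma exists_mem_Icc_cos_neg {L U : ℝ} (hLU : L ≤ U) (hL : L < π + π / 2) (hU : π / 2 < U) :
    ∃ ξ ∈ Icc L U, Real.cos ξ < 0 := by
  refine ⟨max L (min U π), ⟨le_max_left _ _, max_le hLU (min_le_left _ _)⟩,
    Real.cos_neg_of_pi_div_two_lt_of_lt ?_ ?_⟩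
  · exact (lt_min hU (by linarith [Real.pi_pos])).trans_le (le_max_right _ _)
  · exact max_lt hL ((min_le_right _ _).trans_lt (by linarith [Real.pi_pos]))

lemma re_exp_mul_nonneg_of_mem_closedSector {a b ω : ℝ} {z : ℂ} (hz : z ∈ closedSector a b)
    (h₁ : -(π / 2) - a ≤ ω) (h₂ : ω ≤ π / 2 - b) :
    0 ≤ (exp (ω * I) * z).re := by
  obtain ⟨r, hr, θ, ⟨haθ, hθb⟩, rfl⟩ := hz
  rw [mul_left_comm, ← exp_add, ← add_mul, ← ofReal_add, re_ofReal_mul, exp_ofReal_mul_I_re]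
  exact mul_nonneg hr (Real.cos_nonneg_of_mem_Icc ⟨by linarith, by linarith⟩)

lemma exists_re_mul_exp_neg_of_notMem_closedSector {a b : ℝ} (hab : a ≤ b) (hba : b ≤ a + π)
    {l : ℂ} (hl : l ∉ closedSector a b) :
    ∃ ω ∈ Icc (-(π / 2) - a) (π / 2 - b), (l * exp (ω * I)).re < 0 := by
  have hl₀ : l ≠ 0 := by
    rintro rfl
    exact hl ⟨0, le_rfl, a, ⟨le_rfl, hab⟩, by simp⟩
  obtain ⟨ψ, ⟨haψ, hψa⟩, hlψ⟩ := exists_eq_norm_mul_exp_mem_Ico l a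
  have hbψ : b < ψ := not_le.1 fun hψb => hl ⟨‖l‖, norm_nonneg l, ψ, ⟨haψ, hψb⟩, hlψ⟩
  obtain ⟨ξ, ⟨hξL, hξU⟩, hcos⟩ := exists_mem_Icc_cos_neg (L := ψ - π / 2 - a)
    (U := ψ + π / 2 - b) (by linarith) (by linarith) (by linarith)
  refine ⟨ξ - ψ, ⟨by linarith, by linarith⟩, ?_⟩
  rw [hlψ, mul_assoc, ← exp_add, ← add_mul, ← ofReal_add, add_sub_cancel, re_ofReal_mul,
    exp_ofReal_mul_I_re]
  exact mul_neg_of_pos_of_neg (norm_pos_iff.2 hl₀) hcos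

lemma posOrthant_eq_pi (k : ℕ) : posOrthant k = univ.pi fun _ => Ioi 0 := by
  ext t
  simp [posOrthant]

lemma measurableSet_posOrthant (k : ℕ) : MeasurableSet (posOrthant k) :=
  posOrthant_eq_pi k ▸ MeasurableSet.univ_pi fun _ => measurableSet_Ioi

lemma volume_restrict_posOrthant (k : ℕ) :
    volume.restrict (posOrthant k) = Measure.pi fun _ : Fin k => volume.restrict (Ioi (0 : ℝ)) := by
  rw [posOrthant_eq_pi, volume_pi, Measure.restrict_pi_pi]

lemma integrableOn_posOrthant_exp_sum_mul {k : ℕ} {r : Fin k → ℝ} (hr : ∀ j, r j < 0) :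
    IntegrableOn (fun t : Fin k → ℝ => Real.exp (∑ j, r j * t j)) (posOrthant k) := by
  simp_rw [IntegrableOn, volume_restrict_posOrthant, Real.exp_sum]
  exact Integrable.fintype_prod fun j => integrableOn_exp_mul_Ioi (hr j) 0

lemma integral_posOrthant_cexp_sum_mul {k : ℕ} {c : Fin k → ℂ} (hc : ∀ j, (c j).re < 0) :
    ∫ t in posOrthant k, exp (∑ j, c j * t j) = ∏ j, -(c j)⁻¹ := by
  simp_rw [volume_restrict_posOrthant, exp_sum]
  rw [integral_fintype_prod_eq_prod (fun j (s : ℝ) => exp (c j * s))]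
  refine Finset.prod_congr rfl fun j _ => ?_
  rw [integral_exp_mul_complex_Ioi (hc j) 0]
  simp [neg_div]

section Fubini

variable {X : Type*} [MeasurableSpace X] {μ : Measure X} {k : ℕ}
  {c : X → Fin k → ℂ} {r : Fin k → ℝ} {g : X → ℂ}

lemma integrable_posOrthant_prod_cexp_sum_mul (hc : Measurable c) (hr : ∀ j, r j < 0)
    (hcr : ∀ᵐ x ∂μ, ∀ j, (c x j).re ≤ r j) (hg : Integrable g μ) :
    Integrable (fun p : (Fin k → ℝ) × X => exp (∑ j, c p.2 j * p.1 j) * g p.2)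
      ((volume.restrict (posOrthant k)).prod μ) := by
  refine ((integrableOn_posOrthant_exp_sum_mul hr).mul_prod hg.norm).mono' ?_ ?_
  · exact (by fun_prop : Measurable fun p : (Fin k → ℝ) × X =>
      exp (∑ j, c p.2 j * p.1 j)).aestronglyMeasurable.mul hg.aestronglyMeasurable.comp_snd
  · filter_upwards [(Measure.quasiMeasurePreserving_fst (ν := μ)).ae
      (ae_restrict_mem (measurableSet_posOrthant k)),
      (Measure.quasiMeasurePreserving_snd (μ := volume.restrict (posOrthant k))).ae hcr]
      with p ht hcr
    rw [norm_mul, norm_exp, re_sum]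
    gcongr with j
    rw [re_mul_ofReal]
    exact mul_le_mul_of_nonneg_right (hcr j) (ht j).le

theorem integral_posOrthant_integral_cexp_sum_mul [SFinite μ] (hc : Measurable c)
    (hr : ∀ j, r j < 0) (hcr : ∀ᵐ x ∂μ, ∀ j, (c x j).re ≤ r j) (hg : Integrable g μ) :
    ∫ t in posOrthant k, ∫ x, exp (∑ j, c x j * t j) * g x ∂μ
      = ∫ x, (∏ j, -(c x j)⁻¹) * g x ∂μ := by
  rw [integral_integral_swap (integrable_posOrthant_prod_cexp_sum_mul hc hr hcr hg)]
  refine integral_congr_ae (hcr.mono fun x hx => ?_)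
  beta_reduce
  rw [integral_mul_const, integral_posOrthant_cexp_sum_mul fun j => (hx j).trans_lt (hr j)]

end Fubini

/-- A complex measure `ν` of bounded variation on `S̄_{α,β} ⊆ ℂᵏ` is encoded as a finite measure `μ` concentrated on `S̄_{α,β}` together with an
integrable density `g`.  Its Fourier–Borel transform is `FB(ν)(σ) = ∫ e^{−σ·ζ} g(ζ) dμ(ζ)` and
its Cauchy transform is `C(ν)(λ) = (2πi)^{-k} ∫ Πⱼ (ζⱼ−λⱼ)⁻¹ g(ζ) dμ(ζ)`. -/
theorem statement11
    {k : ℕ}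
    (α β : Fin k → ℝ) (hαβ : ∀ j, α j ≤ β j) (hπ : ∀ j, β j < α j + Real.pi)
    (S : Set (Fin k → ℂ)) (hS : S = {ζ | ∀ j, ζ j ∈ closedSector (α j) (β j)})
    (μ : MeasureTheory.Measure (Fin k → ℂ)) [MeasureTheory.IsFiniteMeasure μ]
    (g : (Fin k → ℂ) → ℂ)
    (hg : MeasureTheory.Integrable g μ) (hsupp : μ Sᶜ = 0)
    (lam : Fin k → ℂ) (hlam : ∀ j, lam j ∉ closedSector (α j) (β j)) :
    -- (a)
    (∀ j, ∃ ω ∈ Set.Icc (-(Real.pi / 2) - α j) (Real.pi / 2 - β j),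
      (lam j * Complex.exp ((ω : ℂ) * Complex.I)).re < 0) ∧
    -- (b)
    (∀ ωv : Fin k → ℝ,
      (∀ j, ωv j ∈ Set.Icc (-(Real.pi / 2) - α j) (Real.pi / 2 - β j) ∧
        (lam j * Complex.exp ((ωv j : ℂ) * Complex.I)).re < 0) →
      (1 / (2 * (Real.pi : ℂ) * Complex.I)) ^ k *
        ∫ t in posOrthant k,
          (Complex.exp (∑ j, lam j * ((t j : ℂ) * Complex.exp ((ωv j : ℂ) * Complex.I))) *
            (∫ ζ, Complex.exp (-∑ j, ((t j : ℂ) * Complex.exp ((ωv j : ℂ) * Complex.I)) * ζ j) *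
              g ζ ∂μ)) *
          ∏ j, Complex.exp ((ωv j : ℂ) * Complex.I)
      = (1 / (2 * (Real.pi : ℂ) * Complex.I)) ^ k *
          ∫ ζ, (∏ j, (ζ j - lam j)⁻¹) * g ζ ∂μ) := by
  refine ⟨fun j => exists_re_mul_exp_neg_of_notMem_closedSector (hαβ j) (hπ j).le (hlam j),
    fun ω hω => ?_⟩
  set e : Fin k → ℂ := fun j => exp (ω j * I)
  have hcr : ∀ᵐ ζ ∂μ, ∀ j, (e j * (lam j - ζ j)).re ≤ (lam j * e j).re := by
    filter_upwards [(mem_ae_iff.2 hsupp : ∀ᵐ ζ ∂μ, ζ ∈ S)] with ζ hζ j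
    rw [hS] at hζ
    have := re_exp_mul_nonneg_of_mem_closedSector (hζ j) (hω j).1.1 (hω j).1.2
    rw [mul_sub, sub_re, mul_comm (lam j)]
    linarith
  have hrot : ∀ t : Fin k → ℝ,
      (exp (∑ j, lam j * (t j * e j)) * ∫ ζ, exp (-∑ j, (t j * e j) * ζ j) * g ζ ∂μ) * ∏ j, e j
        = (∏ j, e j) * ∫ ζ, exp (∑ j, e j * (lam j - ζ j) * t j) * g ζ ∂μ := by
    intro t
    rw [mul_comm, ← integral_const_mul]
    refine congrArg _ (integral_congr_ae (Eventually.of_forall fun ζ => ?_))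
    beta_reduce
    rw [← mul_assoc, ← exp_add, ← sub_eq_add_neg, ← Finset.sum_sub_distrib]
    congr 2
    exact Finset.sum_congr rfl fun j _ => by ring
  congr 1
  refine (integral_congr_ae (Eventually.of_forall hrot)).trans ?_
  rw [integral_const_mul,
    integral_posOrthant_integral_cexp_sum_mul (by fun_prop) (fun j => (hω j).2) hcr hg,
    ← integral_const_mul]
  congr 1 with ζ
  rw [← mul_assoc, ← Finset.prod_mul_distrib]
  congr 1
  refine Finset.prod_congr rfl fun j _ => ?_
  rw [← inv_neg, neg_mul_eq_mul_neg, neg_sub, mul_inv, ← mul_assoc,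
    mul_inv_cancel₀ (exp_ne_zero _), one_mul]
end
end
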